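/- arXiv:1511.04005 — 11 statements merged into one kernel-verified Lean document; each statement's English description precedes it below -/
import Mathlib

section
/- For all positive integers m and n, the number (m+n) divides the product C(m+n-2, m-1) * C(n, m) * C(2n, n), where C denotes the binomial coefficient. -/
/-!
For `m ≤ n`, trinomial revision gives `C(n, m) C(2n, n) = C(2n, m + n) C(m + n, m)` and absorption
gives `m C(m + n, m) = (m + n) C(m + n - 1, m - 1)`, so `m` times the product equals
`(m + n) C(2n, m + n) X` with `X = C(m + n - 1, m - 1) C(m + n - 2, m - 1)`. It remains that `m ∣ X`:
absorbing `m` into either factor of `X` shows that `m` divides both `n X` and `(n - 1) X`.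
For `n < m` the product vanishes.
-/

namespace Nat

theorem succ_dvd_choose_mul_choose (k j : ℕ) :
    k + 1 ∣ (k + j + 1).choose k * (k + j).choose k := by
  have h₁ : k + 1 ∣ (j + 1) * ((k + j + 1).choose k * (k + j).choose k) := by
    refine ⟨(k + j + 1).choose (k + 1) * (k + j).choose k, ?_⟩
    have := choose_succ_right_eq (k + j + 1) k
    rw [show k + j + 1 - k = j + 1 by omega] at this
    linear_combination (k + j).choose k * this.symm
  have h₂ : k + 1 ∣ j * ((k + j + 1).choose k * (k + j).choose k) := by
    refine ⟨(k + j).choose (k + 1) * (k + j + 1).choose k, ?_⟩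
    have := choose_succ_right_eq (k + j) k
    rw [Nat.add_sub_cancel_left] at this
    linear_combination (k + j + 1).choose k * this.symm
  rw [add_one_mul] at h₁
  exact (Nat.dvd_add_right h₂).mp h₁

theorem choose_mul_choose_comm (a b c : ℕ) :
    (a + b + c).choose (a + b) * (a + b).choose a =
      (a + b + c).choose (a + c) * (a + c).choose a := by
  rw [choose_mul (le_add_right a b), choose_mul (le_add_right a c)]
  simp only [add_assoc, Nat.add_sub_cancel_left]
  exact congrArg _ choose_symm_add

end Nat

theorem stmt_0_general (m n : ℕ) (hm : 0 < m) :
    (m + n) ∣ (m + n - 2).choose (m - 1) * n.choose m * (2 * n).choose n := by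
  obtain hnm | hmn := lt_or_ge n m
  · simp [Nat.choose_eq_zero_of_lt hnm]
  obtain ⟨k, rfl⟩ : ∃ k, m = k + 1 := ⟨m - 1, by omega⟩
  obtain ⟨d, rfl⟩ := Nat.exists_eq_add_of_le hmn
  set n := k + 1 + d
  have hrevision := Nat.choose_mul_choose_comm (k + 1) d n
  have habsorb := Nat.add_one_mul_choose_eq (k + (k + d) + 1) k
  rw [← two_mul] at hrevision
  rw [show k + (k + d) + 1 + 1 = k + 1 + n by omega] at habsorb
  rw [show k + 1 + n - 2 = k + (k + d) by omega, Nat.add_sub_cancel]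
  refine Nat.dvd_of_mul_dvd_mul_left (Nat.succ_pos k) ?_
  have hscale : (k + 1) * ((k + (k + d)).choose k * n.choose (k + 1) * (2 * n).choose n) =
      (k + 1 + n) * ((2 * n).choose (k + 1 + n) *
        ((k + (k + d) + 1).choose k * (k + (k + d)).choose k)) := by
    linear_combination (k + 1) * (k + (k + d)).choose k * hrevision +
      (k + (k + d)).choose k * (2 * n).choose (k + 1 + n) * habsorb.symm
  rw [hscale, mul_comm (k + 1)]
  exact mul_dvd_mul_left _ ((Nat.succ_dvd_choose_mul_choose k (k + d)).mul_left _)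

theorem stmt_0 (m n : ℕ) (hm : 0 < m) (hn : 0 < n) :
    (m + n) ∣ (m + n - 2).choose (m - 1) * n.choose m * (2 * n).choose n :=
  stmt_0_general m n hm
end

section
/- For any positive integer n, the sum over k from 0 to n-1 of (4k+3)*g_k(x) is a polynomial in x with integer coefficients all divisible by n; equivalently, (1/n) * sum_{k=0}^{n-1} (4k+3) g_k(x) lies in Z[x]. -/
/-!
The coefficient of `x ^ j` in `∑_{k<n} (4k+3) g_k(x)` is `∑_{k<n} (4k+3) C(2j,j) C(k,j)²`.
Write the summand in the binomial basis `k ↦ C(k,i)`: by the hockey-stick identity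
`∑_{k<n} C(k,i) = C(n,i+1)`, and `(i+1) C(n,i+1) = n C(n-1,i)`, so it suffices that `i+1` divides
the `i`-th coordinate. The coordinates come from
`C(2j,j) C(k,j)² = ∑_m C(2j,m) C(m,j)² C(k,m)` (Vandermonde) and
`(4k+3) C(k,m) = (4m+3) C(k,m) + 4(m+1) C(k,m+1)`. Modulo `m+2` the `(m+1)`-st coordinate is
`-(w(m+1) + 4 w(m))` with `w(m) = C(2j,m) C(m,j)²`, and `(m+1)² (w(m+1) + 4 w(m))` is an explicit
multiple of `m+2`, which is coprime to `m+1`.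
-/

open Polynomial Finset

/-- The Sun polynomials `g_n(x) = ∑_{k=0}^n C(n,k)^2 C(2k,k) x^k` in `ℤ[x]`. -/
noncomputable def sunPoly (n : ℕ) : Polynomial ℤ :=
  ∑ k ∈ Finset.range (n + 1),
    Polynomial.C ((n.choose k : ℤ) ^ 2 * ((2 * k).choose k : ℤ)) * Polynomial.X ^ k

lemma sunPoly_coeff (k j : ℕ) :
    (sunPoly k).coeff j = (k.choose j : ℤ) ^ 2 * ((2 * j).choose j : ℤ) := by
  simp only [sunPoly, finsetSum_coeff, coeff_C_mul_X_pow]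
  rw [sum_ite_eq]
  split_ifs with h
  · rfl
  · simp [Nat.choose_eq_zero_of_lt (by simpa using h : k < j)]

namespace Nat

theorem cast_succ_mul_choose_succ (n k : ℕ) :
    ((k : ℤ) + 1) * n.choose (k + 1) = ((n : ℤ) - k) * n.choose k := by
  rcases le_or_gt k n with h | h
  · have := congrArg (Nat.cast : ℕ → ℤ) (choose_succ_right_eq n k)
    push_cast [Nat.cast_sub h] at this
    linarith
  · simp [choose_eq_zero_of_lt h, choose_eq_zero_of_lt (h.trans (lt_succ_self k))]

theorem cast_succ_mul_choose (n k : ℕ) :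
    ((n : ℤ) + 1) * n.choose k = ((n : ℤ) + 1 - k) * (n + 1).choose k := by
  rcases le_or_gt k (n + 1) with h | h
  · have := congrArg (Nat.cast : ℕ → ℤ) (choose_mul_succ_eq n k)
    push_cast [Nat.cast_sub h] at this
    linarith
  · simp [choose_eq_zero_of_lt h, choose_eq_zero_of_lt (lt_of_succ_lt h)]

theorem self_mul_choose (n k : ℕ) :
    n * n.choose k = k * n.choose k + (k + 1) * n.choose (k + 1) := by
  have h := cast_succ_mul_choose_succ n k
  have : (n : ℤ) * n.choose k = k * n.choose k + (k + 1) * n.choose (k + 1) := by linarith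
  exact_mod_cast this

theorem sum_range_choose_eq_choose_succ (n k : ℕ) :
    ∑ i ∈ range n, i.choose k = n.choose (k + 1) := by
  induction n with
  | zero => simp
  | succ n ih => rw [sum_range_succ, ih, choose_succ_succ', add_comm]

end Nat

theorem dvd_sum_range_of_eq_sum_mul_choose {f c : ℕ → ℕ} {N : ℕ}
    (hf : ∀ k, f k = ∑ i ∈ range N, c i * k.choose i) (hc : ∀ i, i + 1 ∣ c i) (n : ℕ) :
    n ∣ ∑ k ∈ range n, f k := by
  have hsum : ∑ k ∈ range n, f k = ∑ i ∈ range N, c i * n.choose (i + 1) := by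
    simp only [hf, sum_comm (s := range n), ← mul_sum, Nat.sum_range_choose_eq_choose_succ]
  rw [hsum]
  refine dvd_sum fun i _ => ?_
  obtain ⟨d, hd⟩ := hc i
  rcases n with _ | n
  · simp
  · refine ⟨d * n.choose i, ?_⟩
    rw [hd, mul_comm (i + 1), mul_assoc, mul_comm (i + 1), ← Nat.add_one_mul_choose_eq]
    ring

def sunWeight (j m : ℕ) : ℕ := (2 * j).choose m * m.choose j ^ 2

theorem sum_range_sunWeight_mul_choose (j k : ℕ) :
    ∑ m ∈ range (2 * j + 1), sunWeight j m * k.choose m =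
      (2 * j).choose j * k.choose j ^ 2 := by
  have hterm (i : ℕ) : sunWeight j (j + i) * k.choose (j + i) =
      (2 * j).choose j * k.choose j * (j.choose i * (k - j).choose i) := by
    have h₁ := Nat.choose_mul (n := 2 * j) (Nat.le_add_right j i)
    have h₂ := Nat.choose_mul (n := k) (Nat.le_add_right j i)
    rw [Nat.add_sub_cancel_left, show 2 * j - j = j by omega] at h₁
    rw [Nat.add_sub_cancel_left] at h₂
    rw [sunWeight, sq]
    calc _ = ((2 * j).choose (j + i) * (j + i).choose j) *
          (k.choose (j + i) * (j + i).choose j) := by ring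
      _ = _ := by rw [h₁, h₂]; ring
  have hvanish : ∀ m ∈ range j, sunWeight j m * k.choose m = 0 := fun m hm => by
    simp [sunWeight, Nat.choose_eq_zero_of_lt (mem_range.mp hm)]
  rw [show 2 * j + 1 = j + (j + 1) by ring, sum_range_add, sum_eq_zero hvanish, zero_add]
  simp only [hterm, ← mul_sum]
  rcases le_or_gt j k with h | h
  · have hvandermonde : ∑ i ∈ range (j + 1), j.choose i * (k - j).choose i = k.choose j := by
      rw [← Nat.sub_add_cancel h, Nat.add_choose_eq, Nat.sum_antidiagonal_eq_sum_range_succ_mk,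
        Nat.add_sub_cancel]
      refine sum_congr rfl fun i hi => ?_
      rw [Nat.choose_symm (mem_range_succ_iff.mp hi), mul_comm]
    rw [hvandermonde, sq, mul_assoc]
  · simp [Nat.choose_eq_zero_of_lt h]

theorem sq_mul_sunWeight_add (j m : ℕ) :
    ((m : ℤ) + 1) ^ 2 * (sunWeight j (m + 1) + 4 * sunWeight j m) =
      (m + 2) * ((m + 1).choose j) ^ 2 *
        (2 * ((m : ℤ) + 1 - j) * (2 * j).choose m + (m + 1) * (2 * j).choose (m + 2)) := by
  have hupper := Nat.cast_succ_mul_choose m j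
  have hlower₀ := Nat.cast_succ_mul_choose_succ (2 * j) m
  have hlower₁ := Nat.cast_succ_mul_choose_succ (2 * j) (m + 1)
  simp only [sunWeight]
  push_cast at *
  linear_combination
    4 * ((2 * j).choose m : ℤ) * ((m + 1) * m.choose j + (m + 1 - j) * (m + 1).choose j) *
        hupper -
      ((m + 1).choose j : ℤ) ^ 2 * (m + 1) * hlower₁ +
      2 * (m + 1 - j) * ((m + 1).choose j : ℤ) ^ 2 * hlower₀

theorem succ_succ_dvd_sunWeight_add (j m : ℕ) :
    m + 2 ∣ sunWeight j (m + 1) + 4 * sunWeight j m := by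
  have hcop : IsCoprime ((m : ℤ) + 2) (((m : ℤ) + 1) ^ 2) :=
    IsCoprime.pow_right ⟨1, -1, by ring⟩
  have hdvd : ((m : ℤ) + 2) ∣
      (sunWeight j (m + 1) + 4 * sunWeight j m) * ((m : ℤ) + 1) ^ 2 := by
    rw [mul_comm, sq_mul_sunWeight_add, mul_assoc]
    exact dvd_mul_right _ _
  exact_mod_cast hcop.dvd_of_dvd_mul_right hdvd

def sunCoeff (j : ℕ) : ℕ → ℕ
  | 0 => 3 * sunWeight j 0
  | i + 1 => (4 * i + 7) * sunWeight j (i + 1) + 4 * (i + 1) * sunWeight j i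

theorem sum_range_sunCoeff_mul_choose (j k : ℕ) :
    ∑ i ∈ range (2 * j + 2), sunCoeff j i * k.choose i =
      (4 * k + 3) * ((2 * j).choose j * k.choose j ^ 2) := by
  have hlinear (m : ℕ) : (4 * k + 3) * (sunWeight j m * k.choose m) =
      (4 * m + 3) * sunWeight j m * k.choose m +
        4 * (m + 1) * sunWeight j m * k.choose (m + 1) := by
    linear_combination 4 * sunWeight j m * Nat.self_mul_choose k m
  have htop : sunWeight j (2 * j + 1) = 0 := by simp [sunWeight]
  have hextend : ∑ m ∈ range (2 * j + 1), (4 * m + 3) * sunWeight j m * k.choose m =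
      ∑ m ∈ range (2 * j + 2), (4 * m + 3) * sunWeight j m * k.choose m := by
    rw [sum_range_succ _ (2 * j + 1), htop, mul_zero, zero_mul, add_zero]
  rw [← sum_range_sunWeight_mul_choose, mul_sum, sum_congr rfl fun m _ => hlinear m,
    sum_add_distrib, hextend, sum_range_succ' (fun i => sunCoeff j i * k.choose i),
    sum_range_succ' (fun m => (4 * m + 3) * sunWeight j m * k.choose m), add_right_comm,
    ← sum_add_distrib]
  congr 1
  exact sum_congr rfl fun i _ => by simp only [sunCoeff]; ring

theorem succ_dvd_sunCoeff (j : ℕ) : ∀ i, i + 1 ∣ sunCoeff j i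
  | 0 => one_dvd _
  | m + 1 => by
    -- `4m + 7 ≡ -1` and `4(m + 1) ≡ -4` modulo `m + 2`
    refine (Nat.dvd_add_left (succ_succ_dvd_sunWeight_add j m)).mp
      ⟨4 * (sunWeight j (m + 1) + sunWeight j m), ?_⟩
    simp only [sunCoeff]
    ring

theorem stmt_1_general (n : ℕ) :
    ∀ j : ℕ, (n : ℤ) ∣
      (∑ k ∈ Finset.range n, Polynomial.C (4 * (k : ℤ) + 3) * sunPoly k).coeff j := by
  intro j
  have hcoeff : (∑ k ∈ range n, C (4 * (k : ℤ) + 3) * sunPoly k).coeff j =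
      ((∑ k ∈ range n, (4 * k + 3) * ((2 * j).choose j * k.choose j ^ 2) : ℕ) : ℤ) := by
    simp only [finsetSum_coeff, coeff_C_mul, sunPoly_coeff]
    push_cast
    exact sum_congr rfl fun k _ => by ring
  rw [hcoeff, Int.natCast_dvd_natCast]
  exact dvd_sum_range_of_eq_sum_mul_choose (fun k => (sum_range_sunCoeff_mul_choose j k).symm)
    (succ_dvd_sunCoeff j) n

theorem stmt_1 (n : ℕ) (hn : 0 < n) :
    ∀ j : ℕ, (n : ℤ) ∣
      (∑ k ∈ Finset.range n, Polynomial.C (4 * (k : ℤ) + 3) * sunPoly k).coeff j :=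
  stmt_1_general n
end

section
/- For any positive integer n, the integer sum_{k=0}^{n-1} (8k^2+12k+5) * g_k(-1) is divisible by n. -/
/-!
Writing `g k = g_k(-1)`, the sum telescopes along a Wilf–Zeilberger pair `(wzF, wzG)`:
`(8k² + 12k + 5) · t(k, j) = wzF (k+1) j - wzF k j + wzG k (j+1) - wzG k j` for the summands
`t(k, j)` of `g k`, so `∑_{k<n} (8k² + 12k + 5) g k = ∑_j wzF n j`. Each `wzF n j` is divisible by
`n`: its terms without a factor `n` carry `j · C(n, j) = n · C(n - 1, j - 1)`.
-/

open Finset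

section Binomial

variable {R : Type*} [CommRing R]

theorem Nat.cast_add_one_mul_choose_succ (k j : ℕ) :
    ((j : R) + 1) * (k.choose (j + 1) : R) = ((k : R) - j) * (k.choose j : R) := by
  rcases le_or_gt j k with h | h
  · have := congrArg (Nat.cast (R := R)) (Nat.choose_succ_right_eq k j)
    push_cast [Nat.cast_sub h] at this
    linear_combination this
  · simp [Nat.choose_eq_zero_of_lt h, Nat.choose_eq_zero_of_lt (Nat.lt_succ_of_lt h)]

theorem Nat.cast_add_one_sub_mul_succ_choose (k j : ℕ) :
    ((k : R) + 1 - j) * ((k + 1).choose j : R) = ((k : R) + 1) * (k.choose j : R) := by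
  have h1 := Nat.cast_add_one_mul_choose_succ (R := R) (k + 1) j
  have h2 := congrArg (Nat.cast (R := R)) (Nat.add_one_mul_choose_eq k j)
  push_cast at h1 h2
  linear_combination -h1 - h2

theorem Nat.cast_mul_pred_choose (k j : ℕ) :
    (k : R) * ((k - 1).choose j : R) = ((k : R) - j) * (k.choose j : R) := by
  cases k with
  | zero => cases j <;> simp
  | succ m => simpa using (Nat.cast_add_one_sub_mul_succ_choose (R := R) m j).symm

theorem Nat.cast_add_one_mul_catalan (j : ℕ) :
    ((j : R) + 1) * (catalan j : R) = ((2 * j).choose j : R) := by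
  exact_mod_cast congrArg (Nat.cast (R := R)) (succ_mul_catalan_eq_centralBinom j)

theorem Nat.cast_add_one_mul_choose_two_mul_succ (j : ℕ) :
    ((j : R) + 1) * ((2 * (j + 1)).choose (j + 1) : R) =
      2 * (2 * (j : R) + 1) * ((2 * j).choose j : R) := by
  have := congrArg (Nat.cast (R := R)) (Nat.succ_mul_centralBinom_succ j)
  push_cast [Nat.centralBinom] at this
  linear_combination this

end Binomial

def sunPolyNegOne (k : ℕ) : ℤ :=
  ∑ j ∈ range (k + 1), (-1) ^ j * (k.choose j : ℤ) ^ 2 * ((2 * j).choose j : ℤ)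

def wzF (k j : ℕ) : ℤ :=
  (-1) ^ j * (k.choose j : ℤ) ^ 2 *
    (((k : ℤ) ^ 2 - 8 * k * j + 5 * (j : ℤ) ^ 2 + 2 * k - 2 * j) * ((2 * j).choose j : ℤ) +
      2 * ((k : ℤ) ^ 3 + (k : ℤ) ^ 2 - k + j) * (catalan j : ℤ))

def wzG (k j : ℕ) : ℤ :=
  -(-1) ^ j * ((2 * j).choose j : ℤ) * (j : ℤ) ^ 2 * (k.choose j : ℤ) ^ 2

def wzQ (k j : ℕ) : ℤ :=
  (-1) ^ j * (((2 * j).choose j : ℤ) *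
      (((k : ℤ) - 3 * j) * (k.choose j : ℤ) ^ 2 +
        (2 - 5 * (j : ℤ)) * (k.choose j : ℤ) * ((k - 1).choose j : ℤ)) +
    (catalan j : ℤ) *
      ((2 * (k : ℤ) + 2 * (k : ℤ) ^ 2) * (k.choose j : ℤ) ^ 2 -
        2 * (k.choose j : ℤ) * ((k - 1).choose j : ℤ)))

theorem wzF_eq_mul_wzQ (k j : ℕ) : wzF k j = k * wzQ k j := by
  unfold wzF wzQ
  linear_combination ((-1 : ℤ) ^ j * (k.choose j : ℤ) *
    (2 * (catalan j : ℤ) - (2 - 5 * (j : ℤ)) * ((2 * j).choose j : ℤ))) *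
      Nat.cast_mul_pred_choose (R := ℤ) k j

theorem wzF_of_lt {k j : ℕ} (h : k < j) : wzF k j = 0 := by
  simp [wzF, Nat.choose_eq_zero_of_lt h]

theorem wzG_of_lt {k j : ℕ} (h : k < j) : wzG k j = 0 := by
  simp [wzG, Nat.choose_eq_zero_of_lt h]

theorem wzF_self (k : ℕ) : wzF k k = 0 := by
  have := Nat.cast_add_one_mul_catalan (R := ℤ) k
  simp only [wzF, Nat.choose_self, Nat.cast_one]
  linear_combination (2 * (-1 : ℤ) ^ k * (k : ℤ) ^ 2) * this

theorem wz_relation (k j : ℕ) :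
    (8 * (k : ℤ) ^ 2 + 12 * k + 5) * ((-1) ^ j * (k.choose j : ℤ) ^ 2 * ((2 * j).choose j : ℤ)) =
      wzF (k + 1) j - wzF k j + (wzG k (j + 1) - wzG k j) := by
  rcases eq_or_ne j (k + 1) with rfl | hj
  · simp [wzF_self, wzF_of_lt, wzG_of_lt]
  have hM : ((j : ℤ) + 1) * ((k : ℤ) + 1 - j) ^ 2 ≠ 0 := by
    have : (k : ℤ) + 1 - j ≠ 0 := by omega
    positivity
  -- `hM` clears the denominators of `C(k+1, j)`, `C(k, j+1)` and `C(2j+2, j+1)`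
  -- relative to `C(k, j)` and `C(2j, j)`.
  apply mul_left_cancel₀ hM
  have h1 := Nat.cast_add_one_sub_mul_succ_choose (R := ℤ) k j
  have h2 := Nat.cast_add_one_mul_choose_succ (R := ℤ) k j
  have h3 := Nat.cast_add_one_mul_catalan (R := ℤ) j
  have h4 := Nat.cast_add_one_mul_choose_two_mul_succ (R := ℤ) j
  unfold wzF wzG
  set c0 : ℤ := (k.choose j : ℤ)
  set c1 : ℤ := ((k + 1).choose j : ℤ)
  set d0 : ℤ := (k.choose (j + 1) : ℤ)
  set s : ℤ := ((2 * j).choose j : ℤ)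
  set t : ℤ := ((2 * (j + 1)).choose (j + 1) : ℤ)
  set u : ℤ := (catalan j : ℤ)
  push_cast
  linear_combination
    (-(((j : ℤ) + 1) * (-1 : ℤ) ^ j *
        ((((k : ℤ) + 1) ^ 2 - 8 * ((k : ℤ) + 1) * j + 5 * (j : ℤ) ^ 2 + 2 * ((k : ℤ) + 1) - 2 * j) * s +
          2 * (((k : ℤ) + 1) ^ 3 + ((k : ℤ) + 1) ^ 2 - ((k : ℤ) + 1) + j) * u) *
        (((k : ℤ) + 1 - j) * c1 + ((k : ℤ) + 1) * c0))) * h1 +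
    (-(2 * (2 * (j : ℤ) + 1) * (-1 : ℤ) ^ j * ((k : ℤ) + 1 - j) ^ 2 * s *
        (((j : ℤ) + 1) * d0 + ((k : ℤ) - j) * c0))) * h2 +
    (-(((k : ℤ) + 1) ^ 2 * (-1 : ℤ) ^ j * c0 ^ 2 *
          (2 * (((k : ℤ) + 1) ^ 3 + ((k : ℤ) + 1) ^ 2 - ((k : ℤ) + 1) + j))) +
      ((k : ℤ) + 1 - j) ^ 2 * (-1 : ℤ) ^ j * c0 ^ 2 *
          (2 * ((k : ℤ) ^ 3 + (k : ℤ) ^ 2 - k + j))) * h3 +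
    (-((-1 : ℤ) ^ j * d0 ^ 2 * ((j : ℤ) + 1) ^ 2 * ((k : ℤ) + 1 - j) ^ 2)) * h4

theorem sum_wzF_succ_sub_sum_wzF (k : ℕ) :
    ∑ j ∈ range (k + 2), wzF (k + 1) j - ∑ j ∈ range (k + 1), wzF k j =
      (8 * (k : ℤ) ^ 2 + 12 * k + 5) * sunPolyNegOne k := by
  have hF : ∑ j ∈ range (k + 1), wzF k j = ∑ j ∈ range (k + 2), wzF k j := by
    rw [sum_range_succ _ (k + 1), wzF_of_lt k.lt_succ_self, add_zero]
  have hg : sunPolyNegOne k =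
      ∑ j ∈ range (k + 2), (-1) ^ j * (k.choose j : ℤ) ^ 2 * ((2 * j).choose j : ℤ) := by
    simp [sunPolyNegOne, sum_range_succ _ (k + 1)]
  have hG : ∑ j ∈ range (k + 2), (wzG k (j + 1) - wzG k j) = 0 := by
    rw [sum_range_sub, wzG_of_lt (by omega)]
    simp [wzG]
  rw [hF, hg, mul_sum]
  simp_rw [wz_relation]
  rw [sum_add_distrib, sum_sub_distrib, hG, add_zero]

theorem sum_mul_sunPolyNegOne (n : ℕ) :
    ∑ k ∈ range n, (8 * (k : ℤ) ^ 2 + 12 * k + 5) * sunPolyNegOne k =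
      ∑ j ∈ range (n + 1), wzF n j := by
  let S (m : ℕ) : ℤ := ∑ j ∈ range (m + 1), wzF m j
  have hS0 : S 0 = 0 := by simp [S, wzF]
  calc _ = ∑ k ∈ range n, (S (k + 1) - S k) :=
        sum_congr rfl fun k _ => (sum_wzF_succ_sub_sum_wzF k).symm
    _ = S n := by rw [sum_range_sub, hS0, sub_zero]

theorem stmt_2_general (n : ℕ) :
    (n : ℤ) ∣ ∑ k ∈ Finset.range n, (8 * (k : ℤ) ^ 2 + 12 * k + 5) *
      ∑ j ∈ Finset.range (k + 1), (-1) ^ j * (k.choose j : ℤ) ^ 2 * ((2 * j).choose j : ℤ) :=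
  (dvd_sum fun j _ => ⟨wzQ n j, wzF_eq_mul_wzQ n j⟩).trans (sum_mul_sunPolyNegOne n).symm.dvd

theorem stmt_2 (n : ℕ) (hn : 0 < n) :
    (n : ℤ) ∣ ∑ k ∈ Finset.range n, (8 * (k : ℤ) ^ 2 + 12 * k + 5) *
      ∑ j ∈ Finset.range (k + 1), (-1) ^ j * (k.choose j : ℤ) ^ 2 * ((2 * j).choose j : ℤ) :=
  stmt_2_general n
end

section
/- For positive integers m and n, the rational function (1-q)/(1-q^{m+n}) times the product of Gaussian binomial coefficients [m+n-2 choose m-1]_q * [n choose m]_q * [2n choose n]_q is a polynomial in q with integer coefficients. -/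
/-!
Since `1 - q^N` is squarefree over `ℂ` with the `N`-th roots of unity as roots, it suffices that
every `ζ` with `ζ^N = 1` (here `N = m + n`) is a root of the numerator. For `ζ = 1` the factor
`1 - q` vanishes. If `ζ` has order `d ≥ 2`, then `(q;q)_k = ∏_{1 ≤ i ≤ k} (1 - q^i)` vanishes at `ζ`
to order exactly `⌊k/d⌋`, so `[a+b choose a]_q` vanishes there to order
`⌊(a+b)/d⌋ - ⌊a/d⌋ - ⌊b/d⌋`, which is positive when adding `a` and `b` carries modulo `d`.
As `d ∣ m + n`, a carry occurs in one of `(m-1) + (n-1)`, `n + n`, `m + (n-m)`.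
-/

open Polynomial

/-- The Gaussian binomial coefficient `[n choose k]_q` as a polynomial in `ℤ[q]`,
defined via the `q`-Pascal recurrence `[n+1, k+1]_q = [n, k]_q + q^(k+1) [n, k+1]_q`. -/
noncomputable def qbinom : ℕ → ℕ → Polynomial ℤ
  | _, 0 => 1
  | 0, _ + 1 => 0
  | n + 1, k + 1 => qbinom n k + Polynomial.X ^ (k + 1) * qbinom n (k + 1)

lemma qbinom_zero_right (n : ℕ) : qbinom n 0 = 1 := by
  cases n <;> rfl

lemma qbinom_succ_succ (n k : ℕ) :
    qbinom (n + 1) (k + 1) = qbinom n k + X ^ (k + 1) * qbinom n (k + 1) := rfl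

lemma qbinom_eq_zero_of_lt {n k : ℕ} (h : n < k) : qbinom n k = 0 := by
  induction n generalizing k with
  | zero => obtain ⟨k, rfl⟩ := Nat.exists_eq_add_one.mpr h; rfl
  | succ n ih =>
    obtain ⟨k, rfl⟩ := Nat.exists_eq_add_one.mpr (n.succ_pos.trans h)
    rw [qbinom_succ_succ, ih (by omega), ih (by omega), mul_zero, add_zero]

lemma qbinom_self (n : ℕ) : qbinom n n = 1 := by
  induction n with
  | zero => rfl
  | succ n ih => rw [qbinom_succ_succ, ih, qbinom_eq_zero_of_lt n.lt_succ_self, mul_zero, add_zero]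

noncomputable def qPochhammer (n : ℕ) : ℤ[X] := ∏ i ∈ Finset.range n, (1 - X ^ (i + 1))

lemma qPochhammer_zero : qPochhammer 0 = 1 := rfl

lemma qPochhammer_succ (n : ℕ) : qPochhammer (n + 1) = qPochhammer n * (1 - X ^ (n + 1)) :=
  Finset.prod_range_succ _ n

theorem qbinom_mul_qPochhammer_mul_qPochhammer (a b : ℕ) :
    qbinom (a + b) a * qPochhammer a * qPochhammer b = qPochhammer (a + b) := by
  induction a generalizing b with
  | zero => simp [qbinom_zero_right, qPochhammer_zero]
  | succ a iha =>
    induction b with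
    | zero => simp [qbinom_self, qPochhammer_zero]
    | succ b ihb =>
      have h₁ := iha (b + 1)
      rw [show a + (b + 1) = a + 1 + b by omega] at h₁
      rw [show a + 1 + (b + 1) = a + 1 + b + 1 by omega, qbinom_succ_succ]
      simp only [qPochhammer_succ] at h₁ ihb ⊢
      linear_combination (1 - X ^ (a + 1)) * h₁ + X ^ (a + 1) * (1 - X ^ (b + 1)) * ihb

lemma carry_of_dvd_add {d m n : ℕ} (hd : 2 ≤ d) (hm : 0 < m) (hmn : m ≤ n) (hdvd : d ∣ m + n) :
    d ≤ (m - 1) % d + (n - 1) % d ∨ d ≤ n % d + n % d ∨ d ≤ m % d + (n - m) % d := by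
  -- With `r = m % d`: if `r = 0` the first pair carries, if `2 (d - r) ≥ d` the second,
  -- and otherwise the third.
  have h0 : (m + n) % d = 0 := Nat.mod_eq_zero_of_dvd hdvd
  have h1 : 1 % d = 1 := Nat.mod_eq_of_lt hd
  have e₁ := Nat.add_mod_add_ite m n d
  have e₂ := Nat.add_mod_add_ite (m - 1) 1 d
  have e₃ := Nat.add_mod_add_ite (n - 1) 1 d
  have e₄ := Nat.add_mod_add_ite (n - m) m d
  rw [Nat.sub_add_cancel hm] at e₂
  rw [Nat.sub_add_cancel (by omega)] at e₃
  rw [Nat.sub_add_cancel hmn] at e₄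
  have := Nat.mod_lt m (by omega : 0 < d)
  have := Nat.mod_lt n (by omega : 0 < d)
  have := Nat.mod_lt (m - 1) (by omega : 0 < d)
  have := Nat.mod_lt (n - 1) (by omega : 0 < d)
  have := Nat.mod_lt (n - m) (by omega : 0 < d)
  split_ifs at e₁ e₂ e₃ e₄ <;> omega

section RootOfUnity

variable {K : Type*} [Field K] [CharZero K] {ζ : K} {d : ℕ}

lemma one_sub_X_pow_ne_zero {i : ℕ} (hi : i ≠ 0) : (1 - X ^ i : K[X]) ≠ 0 := by
  intro h
  simpa [hi] using congrArg (eval 0) h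

lemma rootMultiplicity_one_sub_X_pow (hζ : IsPrimitiveRoot ζ d) {i : ℕ} (hi : i ≠ 0) :
    rootMultiplicity ζ (1 - X ^ i : K[X]) = if d ∣ i then 1 else 0 := by
  have hsep : (1 - X ^ i : K[X]).Separable :=
    (separable_X_pow_sub_C (1 : K) (Nat.cast_ne_zero.mpr hi) one_ne_zero).of_dvd
      ⟨-1, by simp⟩
  have hpos := rootMultiplicity_pos (x := ζ) (one_sub_X_pow_ne_zero hi)
  have hle := rootMultiplicity_le_one_of_separable hsep ζ
  have hroot : IsRoot (1 - X ^ i : K[X]) ζ ↔ d ∣ i := by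
    rw [IsRoot.def, eval_sub, eval_one, eval_pow, eval_X, sub_eq_zero, eq_comm,
      hζ.pow_eq_one_iff_dvd]
  rw [hroot] at hpos
  split_ifs with h
  · have := hpos.mpr h; omega
  · have := mt hpos.mp h; omega

lemma qPochhammer_map_ne_zero (n : ℕ) : (qPochhammer n).map (Int.castRingHom K) ≠ 0 := by
  simp only [qPochhammer, Polynomial.map_prod, Polynomial.map_sub, Polynomial.map_one,
    Polynomial.map_pow, map_X]
  exact Finset.prod_ne_zero_iff.mpr fun i _ => one_sub_X_pow_ne_zero i.succ_ne_zero

lemma rootMultiplicity_qPochhammer (hζ : IsPrimitiveRoot ζ d) (n : ℕ) :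
    rootMultiplicity ζ ((qPochhammer n).map (Int.castRingHom K)) = n / d := by
  induction n with
  | zero => simp [qPochhammer]
  | succ n ih =>
    have hne := qPochhammer_map_ne_zero (K := K) (n + 1)
    rw [qPochhammer_succ, Polynomial.map_mul] at hne ⊢
    rw [rootMultiplicity_mul hne, ih]
    simp only [Polynomial.map_sub, Polynomial.map_one, Polynomial.map_pow, map_X]
    rw [rootMultiplicity_one_sub_X_pow hζ n.succ_ne_zero, Nat.succ_div]

theorem isRoot_map_qbinom_of_le_mod_add_mod (hζ : IsPrimitiveRoot ζ d) (hd : 0 < d) {a b : ℕ}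
    (hcarry : d ≤ a % d + b % d) : ((qbinom (a + b) a).map (Int.castRingHom K)).IsRoot ζ := by
  have h := congrArg (·.map (Int.castRingHom K)) (qbinom_mul_qPochhammer_mul_qPochhammer a b)
  simp only [Polynomial.map_mul] at h
  have hne : _ ≠ (0 : K[X]) := h ▸ qPochhammer_map_ne_zero (a + b)
  have hmult := congrArg (rootMultiplicity ζ) h
  rw [rootMultiplicity_mul hne, rootMultiplicity_mul (left_ne_zero_of_mul hne),
    rootMultiplicity_qPochhammer hζ, rootMultiplicity_qPochhammer hζ,
    rootMultiplicity_qPochhammer hζ, Nat.add_div hd, if_pos hcarry] at hmult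
  exact (rootMultiplicity_pos (left_ne_zero_of_mul (left_ne_zero_of_mul hne))).mp (by omega)

theorem isRoot_map_qbinom_mul_qbinom_mul_qbinom (hζ : IsPrimitiveRoot ζ d) (hd : 2 ≤ d)
    {m n : ℕ} (hm : 0 < m) (hmn : m ≤ n) (hdvd : d ∣ m + n) :
    ((qbinom (m + n - 2) (m - 1) * qbinom n m * qbinom (2 * n) n).map
      (Int.castRingHom K)).IsRoot ζ := by
  simp only [Polynomial.map_mul, IsRoot.def, eval_mul, mul_eq_zero]
  rcases carry_of_dvd_add hd hm hmn hdvd with hcarry | hcarry | hcarry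
  · have h := isRoot_map_qbinom_of_le_mod_add_mod hζ (by omega) hcarry
    rw [show m - 1 + (n - 1) = m + n - 2 by omega] at h
    exact Or.inl (Or.inl h)
  · have h := isRoot_map_qbinom_of_le_mod_add_mod hζ (by omega) hcarry
    rw [← two_mul] at h
    exact Or.inr h
  · have h := isRoot_map_qbinom_of_le_mod_add_mod hζ (by omega) hcarry
    rw [Nat.add_sub_cancel' hmn] at h
    exact Or.inl (Or.inr h)

end RootOfUnity

theorem X_pow_sub_one_dvd_of_forall_pow_eq_one {N : ℕ} (hN : 0 < N) {f : ℤ[X]}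
    (hf : ∀ ζ : ℂ, ζ ^ N = 1 → (f.map (Int.castRingHom ℂ)).IsRoot ζ) : X ^ N - 1 ∣ f := by
  have hmonic : (X ^ N - 1 : ℤ[X]).Monic := monic_X_pow_sub_C 1 hN.ne'
  rw [← map_dvd_map (Int.castRingHom ℂ) Int.cast_injective hmonic]
  by_cases hf0 : f.map (Int.castRingHom ℂ) = 0
  · rw [hf0]; exact dvd_zero _
  have hne : (X ^ N - 1 : ℤ[X]).map (Int.castRingHom ℂ) ≠ 0 := (hmonic.map _).ne_zero
  refine (IsAlgClosed.splits _).dvd_of_roots_le_roots hne ?_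
  have hroots : ((X ^ N - 1 : ℤ[X]).map (Int.castRingHom ℂ)).roots = nthRoots N 1 := by
    simp [nthRoots]
  rw [hroots, Multiset.le_iff_subset (Complex.isPrimitiveRoot_exp N hN.ne').nthRoots_one_nodup]
  intro ζ hζ
  exact (mem_roots hf0).mpr (hf ζ ((mem_nthRoots hN).mp hζ))

theorem stmt_3_general (m n : ℕ) (hm : 0 < m) :
    ∃ P : Polynomial ℤ,
      (1 - Polynomial.X ^ (m + n)) * P =
        (1 - Polynomial.X) * (qbinom (m + n - 2) (m - 1) * qbinom n m * qbinom (2 * n) n) := by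
  rcases lt_or_ge n m with hnm | hmn
  · exact ⟨0, by rw [qbinom_eq_zero_of_lt hnm]; ring⟩
  obtain ⟨P, hP⟩ : X ^ (m + n) - 1 ∣
      (1 - X) * (qbinom (m + n - 2) (m - 1) * qbinom n m * qbinom (2 * n) n) := by
    refine X_pow_sub_one_dvd_of_forall_pow_eq_one (by omega) fun ζ hζ => ?_
    have hdvd : orderOf ζ ∣ m + n := orderOf_dvd_of_pow_eq_one hζ
    rw [Polynomial.map_mul, IsRoot.def, eval_mul, mul_eq_zero]
    obtain hd | hd : orderOf ζ = 1 ∨ 2 ≤ orderOf ζ := by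
      have := Nat.pos_of_dvd_of_pos hdvd (by omega); omega
    · left
      simp [orderOf_eq_one_iff.mp hd]
    · exact Or.inr <|
        isRoot_map_qbinom_mul_qbinom_mul_qbinom (IsPrimitiveRoot.orderOf ζ) hd hm hmn hdvd
  exact ⟨-P, by linear_combination -hP⟩

theorem stmt_3 (m n : ℕ) (hm : 0 < m) (hn : 0 < n) :
    ∃ P : Polynomial ℤ,
      (1 - Polynomial.X ^ (m + n)) * P =
        (1 - Polynomial.X) * (qbinom (m + n - 2) (m - 1) * qbinom n m * qbinom (2 * n) n) :=
  stmt_3_general m n hm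
end

section
/- For any non-negative integer n and any x (as a polynomial identity or for all integers x), C(x,n)^2 = sum_{k=0}^{n} C(x, n+k) * C(n+k, k) * C(n, k). -/
open Finset

/-- The generalized binomial coefficient `C(x, n) = x(x-1)⋯(x-n+1)/n!` as a rational number. -/
noncomputable def ratChoose (x : ℚ) (n : ℕ) : ℚ :=
  (∏ i ∈ Finset.range n, (x - i)) / (n.factorial : ℚ)

/-!
Both sides are instances of an identity in any binomial ring. Splitting `x = (x - n) + n`,
Chu–Vandermonde gives `C(x, n) = ∑ₖ C(x - n, k) C(n, k)`, while the trinomial revision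
`C(n + k, n) C(x, n + k) = C(x, n) C(x - n, k)` turns each term of `C(x, n) · ∑ₖ C(x - n, k) C(n, k)`
into the corresponding term on the right.
-/

namespace Ring

variable {R : Type*} [Ring R] [BinomialRing R]

theorem choose_eq_sum_choose_sub_mul_choose (r : R) (n : ℕ) :
    choose r n = ∑ k ∈ range (n + 1), choose (r - n) k * n.choose k := by
  conv_lhs => rw [← sub_add_cancel r (n : R), add_choose_eq n (Nat.cast_commute n _).symm]
  rw [Nat.sum_antidiagonal_eq_sum_range_succ_mk]
  refine sum_congr rfl fun k hk => ?_
  rw [choose_natCast, Nat.choose_symm (mem_range_succ_iff.mp hk)]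

theorem choose_mul_choose_sub (r : R) (n k : ℕ) :
    choose r n * choose (r - n) k = choose r (n + k) * (n + k).choose k := by
  have revision := choose_smul_choose r (Nat.le_add_right n k)
  rwa [Nat.add_sub_cancel_left, nsmul_eq_mul, (Nat.cast_commute _ _).eq, Nat.choose_symm_add,
    eq_comm] at revision

theorem choose_sq_eq_sum (r : R) (n : ℕ) :
    choose r n ^ 2 =
      ∑ k ∈ range (n + 1), choose r (n + k) * (n + k).choose k * n.choose k := by
  calc choose r n ^ 2 = ∑ k ∈ range (n + 1), choose r n * choose (r - n) k * n.choose k := by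
        rw [sq]
        nth_rw 2 [choose_eq_sum_choose_sub_mul_choose]
        simp only [mul_sum, mul_assoc]
    _ = _ := by simp only [choose_mul_choose_sub]

end Ring

theorem ratChoose_eq_ringChoose (x : ℚ) (n : ℕ) : ratChoose x n = Ring.choose x n := by
  rw [Ring.choose_eq_smul, ← Polynomial.aeval_eq_smeval, Polynomial.aeval_def,
    Polynomial.eval₂_eq_eval_map, descPochhammer_map, descPochhammer_eval_eq_prod_range,
    smul_eq_mul, inv_mul_eq_div, ratChoose]

theorem stmt_4 (n : ℕ) (x : ℚ) :
    (ratChoose x n) ^ 2 =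
      ∑ k ∈ Finset.range (n + 1),
        ratChoose x (n + k) * ((n + k).choose k : ℚ) * (n.choose k : ℚ) := by
  simp only [ratChoose_eq_ringChoose]
  exact Ring.choose_sq_eq_sum x n
end

section
/- For all non-negative integers m and n with m+n >= 1, the rational number C(m+n, m) * C(n+1, m) * C(2n, n) * (3m^2 + n^2 + m + n) / ((m+n)(n+1)) is an integer divisible by m+n+1. -/
open Nat

lemma cat_mul (n : ℕ) : (n + 1) * catalan n = (2 * n).choose n := by
  rw [← Nat.centralBinom_eq_two_mul_choose]
  exact succ_mul_catalan_eq_centralBinom n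

lemma cat_mulQ (n : ℕ) : ((n:ℚ) + 1) * (catalan n : ℚ) = ((2 * n).choose n : ℚ) := by
  exact_mod_cast congrArg (fun k : ℕ => (k : ℚ)) (cat_mul n)


section keys
variable (i j : ℕ)

private lemma fact_ne (k : ℕ) : ((k)! : ℚ) ≠ 0 := Nat.cast_ne_zero.mpr (Nat.factorial_ne_zero _)

private lemma hctQ (i j : ℕ) : (catalan (i+j+2) : ℚ)
    = ((2*i+2*j+4).choose (i+j+2) : ℚ) / ((i:ℚ)+j+3) := by
  have h := cat_mulQ (i+j+2)
  rw [show 2*(i+j+2) = 2*i+2*j+4 by ring] at h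
  rw [eq_div_iff (by positivity)]
  push_cast at h ⊢
  linear_combination h

private lemma F1Q (i : ℕ) : ((i+1)! : ℚ) = ((i:ℚ)+1) * ((i)! : ℚ) := by
  rw [Nat.factorial_succ]; push_cast; ring

private lemma F2Q (j : ℕ) : ((j+2)! : ℚ) = ((j:ℚ)+2)*((j:ℚ)+1)*((j)! : ℚ) := by
  rw [show j+2 = (j+1)+1 by omega, Nat.factorial_succ, Nat.factorial_succ]; push_cast; ring

private lemma F3Q (i j : ℕ) : ((i+j+2)! : ℚ) = ((i:ℚ)+j+2)*((i+j+1)! : ℚ) := by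
  rw [show i+j+2 = (i+j+1)+1 by omega, Nat.factorial_succ]; push_cast; ring

private lemma F4Q (i j : ℕ) : ((i+j+3)! : ℚ) = ((i:ℚ)+j+3)*((i:ℚ)+j+2)*((i+j+1)! : ℚ) := by
  rw [show i+j+3 = (i+j+2)+1 by omega, Nat.factorial_succ, show i+j+2 = (i+j+1)+1 by omega,
    Nat.factorial_succ]; push_cast; ring

private lemma F5Q (i j : ℕ) : ((2*i+j+3)! : ℚ) = (2*(i:ℚ)+j+3)*((2*i+j+2)! : ℚ) := by
  rw [show 2*i+j+3 = (2*i+j+2)+1 by omega, Nat.factorial_succ]; push_cast; ring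

private lemma F6Q (i j : ℕ) : ((2*i+j+4)! : ℚ)
    = (2*(i:ℚ)+j+4)*(2*(i:ℚ)+j+3)*((2*i+j+2)! : ℚ) := by
  rw [show 2*i+j+4 = (2*i+j+3)+1 by omega, Nat.factorial_succ, show 2*i+j+3 = (2*i+j+2)+1 by omega,
    Nat.factorial_succ]; push_cast; ring

end keys

lemma mul_choose₁ (i n : ℕ) :
    (i + 1) * (i + n + 1).choose (i + 1) = (i + n + 1) * ((i + n).choose i) := by
  rw [Nat.mul_comm (i+1), ← Nat.add_one_mul_choose_eq]

-- Key identity 1 (Bezout case, m = i+1, n = i+j+2):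
lemma keyQ1 (i j : ℕ) :
    ((i:ℚ)+1) * (-((j:ℚ)+2) * (((2*i+j+2).choose i : ℚ) - ((2*i+j+2).choose (i+1) : ℚ))
        * ((i+j+3).choose (i+1) : ℚ) * (catalan (i+j+2) : ℚ))
      = (2*(i:ℚ)+j+4) * (((2*i+2*j+4).choose j : ℚ) * ((2*i+j+3).choose (i+1) : ℚ)
        * ((2*i+j+2).choose i : ℚ)) := by
  rw [hctQ i j,
      Nat.cast_choose ℚ (show i ≤ 2*i+j+2 by omega),
      Nat.cast_choose ℚ (show i+1 ≤ 2*i+j+2 by omega),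
      Nat.cast_choose ℚ (show i+1 ≤ i+j+3 by omega),
      Nat.cast_choose ℚ (show j ≤ 2*i+2*j+4 by omega),
      Nat.cast_choose ℚ (show i+1 ≤ 2*i+j+3 by omega),
      Nat.cast_choose ℚ (show i+j+2 ≤ 2*i+2*j+4 by omega),
      show 2*i+j+2 - i = i+j+2 by omega, show 2*i+j+2 - (i+1) = i+j+1 by omega,
      show i+j+3 - (i+1) = j+2 by omega, show 2*i+2*j+4 - j = 2*i+j+4 by omega,
      show 2*i+j+3 - (i+1) = i+j+2 by omega, show 2*i+2*j+4 - (i+j+2) = i+j+2 by omega,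
      F4Q i j, F6Q i j, F5Q i j, F3Q i j, F2Q j, F1Q i]
  have n1 := fact_ne i
  have n2 := fact_ne j
  have n3 := fact_ne (i+j+1)
  have n4 := fact_ne (2*i+j+2)
  have n5 := fact_ne (2*i+2*j+4)
  have p1 : ((i:ℚ)+j+3) ≠ 0 := by positivity
  have p2 : ((i:ℚ)+j+2) ≠ 0 := by positivity
  have p3 : ((i:ℚ)+1) ≠ 0 := by positivity
  have p4 : ((j:ℚ)+2) ≠ 0 := by positivity
  have p5 : ((j:ℚ)+1) ≠ 0 := by positivity
  have p6 : (2*(i:ℚ)+j+3) ≠ 0 := by positivity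
  have p7 : (2*(i:ℚ)+j+4) ≠ 0 := by positivity
  field_simp
  ring

lemma keyQ2 (i j : ℕ) :
    ((i:ℚ)+j+2) * (-((j:ℚ)+2) * (((2*i+j+2).choose i : ℚ) - ((2*i+j+2).choose (i+1) : ℚ))
        * ((i+j+3).choose (i+1) : ℚ) * (catalan (i+j+2) : ℚ))
      = (2*(i:ℚ)+j+4) * (((2*i+2*j+4).choose j : ℚ) * ((2*i+j+3).choose (i+1) : ℚ)
        * ((2*i+j+2).choose (i+1) : ℚ)) := by
  rw [hctQ i j,
      Nat.cast_choose ℚ (show i ≤ 2*i+j+2 by omega),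
      Nat.cast_choose ℚ (show i+1 ≤ 2*i+j+2 by omega),
      Nat.cast_choose ℚ (show i+1 ≤ i+j+3 by omega),
      Nat.cast_choose ℚ (show j ≤ 2*i+2*j+4 by omega),
      Nat.cast_choose ℚ (show i+1 ≤ 2*i+j+3 by omega),
      Nat.cast_choose ℚ (show i+j+2 ≤ 2*i+2*j+4 by omega),
      show 2*i+j+2 - i = i+j+2 by omega, show 2*i+j+2 - (i+1) = i+j+1 by omega,
      show i+j+3 - (i+1) = j+2 by omega, show 2*i+2*j+4 - j = 2*i+j+4 by omega,
      show 2*i+j+3 - (i+1) = i+j+2 by omega, show 2*i+2*j+4 - (i+j+2) = i+j+2 by omega,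
      F4Q i j, F6Q i j, F5Q i j, F3Q i j, F2Q j, F1Q i]
  have n1 := fact_ne i
  have n2 := fact_ne j
  have n3 := fact_ne (i+j+1)
  have n4 := fact_ne (2*i+j+2)
  have n5 := fact_ne (2*i+2*j+4)
  have p1 : ((i:ℚ)+j+3) ≠ 0 := by positivity
  have p2 : ((i:ℚ)+j+2) ≠ 0 := by positivity
  have p3 : ((i:ℚ)+1) ≠ 0 := by positivity
  have p4 : ((j:ℚ)+2) ≠ 0 := by positivity
  have p5 : ((j:ℚ)+1) ≠ 0 := by positivity
  have p6 : (2*(i:ℚ)+j+3) ≠ 0 := by positivity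
  have p7 : (2*(i:ℚ)+j+4) ≠ 0 := by positivity
  field_simp
  ring

lemma keyQ3 (i j : ℕ) :
    ((j:ℚ)+1) * ((j:ℚ)+2) * (((2*i+j+3).choose (i+1) : ℚ) * ((i+j+3).choose (i+1) : ℚ)
        * ((2*i+2*j+4).choose (i+j+2) : ℚ))
      = (2*(i:ℚ)+j+3) * ((i:ℚ)+j+3) * (-((j:ℚ)+2)
        * (((2*i+j+2).choose i : ℚ) - ((2*i+j+2).choose (i+1) : ℚ))
        * ((i+j+3).choose (i+1) : ℚ) * (catalan (i+j+2) : ℚ)) := by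
  rw [hctQ i j,
      Nat.cast_choose ℚ (show i ≤ 2*i+j+2 by omega),
      Nat.cast_choose ℚ (show i+1 ≤ 2*i+j+2 by omega),
      Nat.cast_choose ℚ (show i+1 ≤ i+j+3 by omega),
      Nat.cast_choose ℚ (show i+1 ≤ 2*i+j+3 by omega),
      Nat.cast_choose ℚ (show i+j+2 ≤ 2*i+2*j+4 by omega),
      show 2*i+j+2 - i = i+j+2 by omega, show 2*i+j+2 - (i+1) = i+j+1 by omega,
      show i+j+3 - (i+1) = j+2 by omega, show 2*i+j+3 - (i+1) = i+j+2 by omega, show 2*i+2*j+4 - (i+j+2) = i+j+2 by omega,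
      F4Q i j, F5Q i j, F3Q i j, F2Q j, F1Q i]
  have n1 := fact_ne i
  have n2 := fact_ne j
  have n3 := fact_ne (i+j+1)
  have n4 := fact_ne (2*i+j+2)
  have n5 := fact_ne (2*i+2*j+4)
  have p1 : ((i:ℚ)+j+3) ≠ 0 := by positivity
  have p2 : ((i:ℚ)+j+2) ≠ 0 := by positivity
  have p3 : ((i:ℚ)+1) ≠ 0 := by positivity
  have p4 : ((j:ℚ)+2) ≠ 0 := by positivity
  have p5 : ((j:ℚ)+1) ≠ 0 := by positivity
  have p6 : (2*(i:ℚ)+j+3) ≠ 0 := by positivity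
  have p7 : (2*(i:ℚ)+j+4) ≠ 0 := by positivity
  field_simp
  ring

theorem stmt_7 (m n : ℕ) (h : 1 ≤ m + n) :
    ∃ t : ℤ,
      (((m + n).choose m : ℚ) * ((n + 1).choose m : ℚ) * ((2 * n).choose n : ℚ) *
          (3 * (m : ℚ) ^ 2 + (n : ℚ) ^ 2 + m + n)) / (((m + n : ℕ) : ℚ) * ((n + 1 : ℕ) : ℚ)) =
        ((m + n + 1 : ℕ) : ℚ) * (t : ℚ) := by
  rcases Nat.eq_zero_or_pos m with hm | hm
  · -- m = 0, n ≥ 1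
    subst hm
    have hn : 1 ≤ n := by omega
    refine ⟨catalan n, ?_⟩
    have hcat := cat_mulQ n
    have hn0 : ((n:ℚ)) ≠ 0 := Nat.cast_ne_zero.mpr (by omega)
    rw [div_eq_iff (mul_ne_zero (Nat.cast_ne_zero.mpr (by omega)) (Nat.cast_ne_zero.mpr (by omega)))]
    simp only [Nat.choose_zero_right]
    push_cast
    linear_combination (-(n:ℚ)^2-n) * hcat
  · obtain ⟨i, rfl⟩ : ∃ i, m = i + 1 := ⟨m - 1, by omega⟩
    by_cases hb : i + 2 ≤ n
    · -- Bezout case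
      obtain ⟨j, rfl⟩ : ∃ j, n = i + j + 2 := ⟨n - (i + 2), by omega⟩
      rw [show i + 1 + (i + j + 2) = 2*i+j+3 by ring] at h ⊢
      rw [show i + j + 2 + 1 = i + j + 3 by ring,
          show 2 * (i + j + 2) = 2*i+2*j+4 by ring,
          show 2*i+j+3 + 1 = 2*i+j+4 by ring]
      set g : ℕ := Nat.gcd (i+1) (i+j+2) with hgdef
      have hco : Nat.gcd g (2*i+j+4) = 1 := by
        have h1 : Nat.gcd g (2*i+j+4) ∣ i+1 := (Nat.gcd_dvd_left _ _).trans (Nat.gcd_dvd_left _ _)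
        have h2 : Nat.gcd g (2*i+j+4) ∣ i+j+2 :=
          (Nat.gcd_dvd_left _ _).trans (Nat.gcd_dvd_right _ _)
        have h3 : Nat.gcd g (2*i+j+4) ∣ 2*i+j+4 := Nat.gcd_dvd_right _ _
        have h4 : Nat.gcd g (2*i+j+4) ∣ 2*i+j+3 := by
          have h5 := Nat.dvd_add h1 h2
          rwa [show (i+1)+(i+j+2) = 2*i+j+3 by ring] at h5
        have h6 := Nat.dvd_sub h3 h4
        rw [show 2*i+j+4 - (2*i+j+3) = 1 by omega] at h6
        exact Nat.dvd_one.mp h6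
      have hg := Int.gcd_eq_gcd_ab ((i+1:ℕ):ℤ) ((i+j+2:ℕ):ℤ)
      rw [Int.gcd_natCast_natCast] at hg
      have hg2 := Int.gcd_eq_gcd_ab ((g:ℕ):ℤ) ((2*i+j+4:ℕ):ℤ)
      rw [Int.gcd_natCast_natCast, hco] at hg2
      set A' : ℤ := Int.gcdA ((i+1:ℕ):ℤ) ((i+j+2:ℕ):ℤ)
      set B' : ℤ := Int.gcdB ((i+1:ℕ):ℤ) ((i+j+2:ℕ):ℤ)
      set C' : ℤ := Int.gcdA ((g:ℕ):ℤ) ((2*i+j+4:ℕ):ℤ)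
      set E' : ℤ := Int.gcdB ((g:ℕ):ℤ) ((2*i+j+4:ℕ):ℤ)
      set S : ℤ := -((j:ℤ)+2) * (((2*i+j+2).choose i : ℤ) - ((2*i+j+2).choose (i+1) : ℤ))
          * ((i+j+3).choose (i+1) : ℤ) * (catalan (i+j+2) : ℤ) with hSdef
      set A1 : ℤ := ((2*i+2*j+4).choose j : ℤ) * ((2*i+j+3).choose (i+1) : ℤ)
          * ((2*i+j+2).choose i : ℤ) with hA1def
      set A2 : ℤ := ((2*i+2*j+4).choose j : ℤ) * ((2*i+j+3).choose (i+1) : ℤ)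
          * ((2*i+j+2).choose (i+1) : ℤ) with hA2def
      have hq1 := keyQ1 i j
      have hq2 := keyQ2 i j
      have hq3 := keyQ3 i j
      have hgq : ((g:ℕ):ℚ) = ((i:ℚ)+1)*((A':ℤ):ℚ) + ((i:ℚ)+j+2)*((B':ℤ):ℚ) := by
        have := congrArg (fun z : ℤ => (z:ℚ)) hg
        push_cast at this ⊢
        linear_combination this
      have hg2q : (1:ℚ) = ((g:ℕ):ℚ)*((C':ℤ):ℚ) + (2*(i:ℚ)+j+4)*((E':ℤ):ℚ) := by
        have := congrArg (fun z : ℤ => (z:ℚ)) hg2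
        push_cast at this ⊢
        linear_combination this
      refine ⟨2 * (((2*i+j+2).choose i : ℤ) * ((i+j+3).choose (i+1) : ℤ) * (catalan (i+j+2) : ℤ))
        + (C'*(A'*A1 + B'*A2) + E'*S), ?_⟩
      have hz1 : ((i:ℤ)+1) * S = (2*(i:ℤ)+j+4) * A1 := by
        rw [hSdef, hA1def]; exact_mod_cast hq1
      have hz2 : ((i:ℤ)+j+2) * S = (2*(i:ℤ)+j+4) * A2 := by
        rw [hSdef, hA2def]; exact_mod_cast hq2
      have hgz : ((g:ℕ):ℤ) = ((i:ℤ)+1)*A' + ((i:ℤ)+j+2)*B' := by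
        push_cast at hg ⊢; linear_combination hg
      have hg2z : (1:ℤ) = ((g:ℕ):ℤ)*C' + (2*(i:ℤ)+j+4)*E' := by
        push_cast at hg2 ⊢; linear_combination hg2
      have hzs : (2*(i:ℤ)+j+4) * (C'*(A'*A1 + B'*A2) + E'*S) = S := by
        linear_combination (-(C'*A'))*hz1 + (-(C'*B'))*hz2 + (-(C'*S))*hgz + (-S)*hg2z
      have hsq : (2*(i:ℚ)+j+4) * (((C'*(A'*A1 + B'*A2) + E'*S) : ℤ) : ℚ) = ((S:ℤ):ℚ) := by
        exact_mod_cast congrArg (fun z : ℤ => (z:ℚ)) hzs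
      have hSq : ((S:ℤ):ℚ) = -((j:ℚ)+2) * (((2*i+j+2).choose i : ℚ) - ((2*i+j+2).choose (i+1) : ℚ))
          * ((i+j+3).choose (i+1) : ℚ) * (catalan (i+j+2) : ℚ) := by
        rw [hSdef]; push_cast; ring
      have hq3' : ((j:ℚ)+1) * ((j:ℚ)+2) * (((2*i+j+3).choose (i+1) : ℚ)
            * ((i+j+3).choose (i+1) : ℚ) * ((2*i+2*j+4).choose (i+j+2) : ℚ))
          = (2*(i:ℚ)+j+3) * ((i:ℚ)+j+3) * ((S:ℤ):ℚ) := by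
        rw [hSq]; exact hq3
      have f1q : ((i:ℚ)+1) * (((2*i+j+3).choose (i+1)):ℚ)
          = (2*(i:ℚ)+j+3) * (((2*i+j+2).choose i):ℚ) := by
        have hmc := mul_choose₁ i (i+j+2)
        rw [show i+(i+j+2)+1 = 2*i+j+3 by ring, show i+(i+j+2) = 2*i+j+2 by ring] at hmc
        exact_mod_cast congrArg (fun k : ℕ => (k : ℚ)) hmc
      have hcat : ((i:ℚ)+j+3) * (catalan (i+j+2) : ℚ) = (((2*i+2*j+4).choose (i+j+2)):ℚ) := by
        have hc := cat_mulQ (i+j+2)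
        rw [show 2*(i+j+2) = 2*i+2*j+4 by ring] at hc
        push_cast at hc ⊢
        linear_combination hc
      rw [div_eq_iff (by positivity)]
      push_cast
      push_cast at hsq hq3'
      linear_combination
        (2*(2*(i:ℚ)+j+4)*(((i+j+3).choose (i+1)):ℚ)*(((2*i+2*j+4).choose (i+j+2)):ℚ))*f1q
        + (-(2*(2*(i:ℚ)+j+4)*(((i+j+3).choose (i+1)):ℚ)*(((2*i+j+2).choose i):ℚ)*(2*(i:ℚ)+j+3)))*hcat
        + hq3'
        + (-((2*(i:ℚ)+j+3)*((i:ℚ)+j+3)))*hsq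
    · -- n ≤ i + 1
      refine ⟨2 * (((i+n).choose i : ℤ) * ((n+1).choose (i+1) : ℤ) * (catalan n : ℤ)), ?_⟩
      have f1q : ((i:ℚ)+1) * ((i+n+1).choose (i+1) : ℚ)
          = ((i:ℚ)+n+1) * ((i+n).choose i : ℚ) := by
        exact_mod_cast congrArg (fun k : ℕ => (k : ℚ)) (mul_choose₁ i n)
      have hcat := cat_mulQ n
      have hz : (((i:ℚ)+1) - n) * (((i:ℚ)+1) - n - 1) *
          (((i+1+n).choose (i+1) : ℚ) * ((n+1).choose (i+1) : ℚ) * ((2*n).choose n : ℚ)) = 0 := by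
        have : n = i + 1 ∨ n = i ∨ n < i := by omega
        rcases this with rfl | rfl | hlt
        · push_cast; ring
        · push_cast; ring
        · have : (n+1).choose (i+1) = 0 := Nat.choose_eq_zero_of_lt (by omega)
          rw [this]; push_cast; ring
      rw [div_eq_iff (by positivity)]
      rw [show i + 1 + n = i + n + 1 by omega] at *
      push_cast
      push_cast at f1q hcat hz
      linear_combination (2*((i:ℚ)+n+2)*(((n+1).choose (i+1)):ℚ)*(((2*n).choose n):ℚ)) * f1q
        - (2*((i:ℚ)+n+2)*(((n+1).choose (i+1)):ℚ)*(((i+n).choose i):ℚ)*((i:ℚ)+n+1)) * hcat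
        + hz
end

section
/- Define S_n = sum_{k=0}^{n-3} (-1)^k * C(2k,k) * C(n-3,k) * C(k, n-k-3) for n >= 3 (and S_n = 0 for n < 3). Then for every non-negative integer n, S_{3n} ≡ S_{3n+1} ≡ -S_{3n+2} (mod 3). -/
/-!
Write `S (m + 3) = ∑ₖ term m k` with `term m k = (-1)^k C(2k,k) C(m,k) C(k,m-k)`. For a prime `p`
and base-`p` digits `r, s < p`, Lucas' theorem factors every binomial coefficient of
`term (p * m + r) (p * j + s)` into a high and a low digit part, so that
`term (p * m + r) (p * j + s) ≡ term m j * term r s (mod p)`. Summing over `j` and `s` gives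
`S (p * m + r + 3) ≡ S (m + 3) * S (r + 3) (mod p)`, and for `p = 3` the values
`S 3 = 1`, `S 4 = -2`, `S 5 = 2` yield the two congruences.
-/

open Finset

/-- `S n = ∑_{k=0}^{n-3} (-1)^k C(2k,k) C(n-3,k) C(k, n-k-3)`, with `S n = 0` for `n < 3`. -/
def S (n : ℕ) : ℤ :=
  ∑ k ∈ Finset.range (n - 2),
    (-1) ^ k * ((2 * k).choose k : ℤ) * ((n - 3).choose k : ℤ) * (k.choose (n - k - 3) : ℤ)

theorem sum_range_mul_eq_sum_sum {M : Type*} [AddCommMonoid M] (f : ℕ → M) (p N : ℕ) :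
    ∑ k ∈ range (p * N), f k = ∑ j ∈ range N, ∑ r ∈ range p, f (p * j + r) := by
  induction N with
  | zero => simp
  | succ N ih => rw [Nat.mul_succ, sum_range_add, ih, sum_range_succ]

def term (m k : ℕ) : ℤ :=
  (-1) ^ k * ((2 * k).choose k : ℤ) * (m.choose k : ℤ) * (k.choose (m - k) : ℤ)

theorem S_add_three (m : ℕ) : S (m + 3) = ∑ k ∈ range (m + 1), term m k := by
  simp only [S, term]
  refine sum_congr (by congr 1) fun k _ => ?_
  congr 3
  omega

theorem S_add_three_eq_sum_range {m N : ℕ} (h : m < N) : S (m + 3) = ∑ k ∈ range N, term m k := by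
  rw [S_add_three]
  refine sum_subset (range_subset_range.mpr h) fun k _ hk => ?_
  simp [term, Nat.choose_eq_zero_of_lt (show m < k by simpa using hk)]

section Lucas

variable {p : ℕ} [Fact p.Prime]

theorem cast_choose_mul_add_mul_add {r s : ℕ} (hr : r < p) (hs : s < p) (a b : ℕ) :
    ((p * a + r).choose (p * b + s) : ZMod p) = a.choose b * r.choose s := by
  have hp : 0 < p := (Fact.out : p.Prime).pos
  have h := (ZMod.natCast_eq_natCast_iff _ _ _).mpr
    (Choose.choose_modEq_choose_mod_mul_choose_div_nat (n := p * a + r) (k := p * b + s) (p := p))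
  rw [Nat.mul_add_mod, Nat.mul_add_mod, Nat.mul_add_div hp, Nat.mul_add_div hp,
    Nat.mod_eq_of_lt hr, Nat.mod_eq_of_lt hs, Nat.div_eq_of_lt hr, Nat.div_eq_of_lt hs] at h
  push_cast [add_zero] at h
  rw [h, mul_comm]

theorem cast_choose_mul_add_sub_mul_add {r s : ℕ} (hr : r < p) (hs : s < p) {m j : ℕ}
    (hjm : j ≤ m) (hsr : s ≤ r) :
    ((p * j + s).choose (p * m + r - (p * j + s)) : ZMod p) =
      j.choose (m - j) * s.choose (r - s) := by
  rw [show p * m + r - (p * j + s) = p * (m - j) + (r - s) by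
    rw [Nat.mul_sub]; have := Nat.mul_le_mul_left p hjm; omega]
  exact cast_choose_mul_add_mul_add hs (by omega) _ _

/-- Doubling the last digit of `k` carries, leaving a last digit of `2k` smaller than that of
`k`. -/
theorem cast_choose_two_mul_self_eq_zero {k : ℕ} (h : p ≤ 2 * (k % p)) :
    ((2 * k).choose k : ZMod p) = 0 := by
  have hk : k % p < p := Nat.mod_lt k (Fact.out : p.Prime).pos
  obtain ⟨d, hd⟩ : ∃ d, 2 * (k % p) = p + d := ⟨2 * (k % p) - p, by omega⟩
  have h2k : 2 * k = p * (2 * (k / p) + 1) + d := by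
    have := Nat.div_add_mod k p
    linarith
  rw [h2k, ← Nat.div_add_mod k p, cast_choose_mul_add_mul_add (by omega) hk,
    Nat.choose_eq_zero_of_lt (by omega : d < k % p)]
  simp

theorem cast_choose_two_mul_mul_add {s : ℕ} (hs : s < p) (b : ℕ) :
    ((2 * (p * b + s)).choose (p * b + s) : ZMod p) = (2 * b).choose b * (2 * s).choose s := by
  rcases lt_or_ge (2 * s) p with h | h
  · rw [show 2 * (p * b + s) = p * (2 * b) + 2 * s by ring, cast_choose_mul_add_mul_add h hs]
  · have hmod : (p * b + s) % p = s := by rw [Nat.mul_add_mod, Nat.mod_eq_of_lt hs]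
    rw [cast_choose_two_mul_self_eq_zero (by rwa [hmod]),
      cast_choose_two_mul_self_eq_zero (k := s) (by rwa [Nat.mod_eq_of_lt hs]), mul_zero]

theorem cast_term_mul_add_mul_add {r s : ℕ} (hr : r < p) (hs : s < p) (m j : ℕ) :
    (term (p * m + r) (p * j + s) : ZMod p) = term m j * term r s := by
  have hsign : ((-1) ^ (p * j + s) : ZMod p) = (-1) ^ j * (-1) ^ s := by
    rw [pow_add, pow_mul, ZMod.pow_card]
  simp only [term]
  push_cast
  rw [hsign, cast_choose_two_mul_mul_add hs, cast_choose_mul_add_mul_add hr hs]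
  by_cases hjs : j ≤ m ∧ s ≤ r
  · rw [cast_choose_mul_add_sub_mul_add hr hs hjs.1 hjs.2]
    ring
  · rcases not_and_or.mp hjs with h | h <;> simp [Nat.choose_eq_zero_of_lt (not_le.mp h)]

theorem cast_S_mul_add_add_three {r : ℕ} (hr : r < p) (m : ℕ) :
    (S (p * m + r + 3) : ZMod p) = S (m + 3) * S (r + 3) := by
  rw [S_add_three_eq_sum_range (N := p * (m + 1)) (by nlinarith), sum_range_mul_eq_sum_sum,
    S_add_three_eq_sum_range (Nat.lt_succ_self m), S_add_three_eq_sum_range hr]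
  push_cast
  rw [sum_mul_sum]
  exact sum_congr rfl fun j _ => sum_congr rfl fun s hs =>
    cast_term_mul_add_mul_add hr (mem_range.mp hs) m j

end Lucas

theorem stmt_9 (n : ℕ) :
    (3 : ℤ) ∣ S (3 * n) - S (3 * n + 1) ∧ (3 : ℤ) ∣ S (3 * n + 1) + S (3 * n + 2) := by
  rcases n with _ | m
  · decide
  have h0 := cast_S_mul_add_add_three (p := 3) (r := 0) (by norm_num) m
  have h1 := cast_S_mul_add_add_three (p := 3) (r := 1) (by norm_num) m
  have h2 := cast_S_mul_add_add_three (p := 3) (r := 2) (by norm_num) m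
  rw [show (S (0 + 3) : ZMod 3) = 1 by decide] at h0
  rw [show (S (1 + 3) : ZMod 3) = 1 by decide] at h1
  rw [show (S (2 + 3) : ZMod 3) = -1 by decide] at h2
  rw [show 3 * (m + 1) = 3 * m + 0 + 3 by ring, show 3 * m + 0 + 3 + 1 = 3 * m + 1 + 3 by ring,
    show 3 * m + 0 + 3 + 2 = 3 * m + 2 + 3 by ring]
  refine ⟨(ZMod.intCast_zmod_eq_zero_iff_dvd _ 3).mp ?_,
    (ZMod.intCast_zmod_eq_zero_iff_dvd _ 3).mp ?_⟩
  · push_cast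
    linear_combination h0 - h1
  · push_cast
    linear_combination h1 + h2
end

section
/- Define S_n = sum_{k=0}^{n-3} (-1)^k * C(2k,k) * C(n-3,k) * C(k, n-k-3) for n >= 3 (and S_n = 0 for n < 3). Then for every non-negative integer n, S_{4n+2} ≡ 0 (mod 4). -/
/-!
In `S (4n+2)` put `m = 4n - 1`, which is odd; every summand carries the factor
`C(2k,k) C(k, m-k)`. Writing `k = i + j` with `j = m - k` and `i = 2k - m` (odd), Kummer's theorem
gives `v₂(C(2k,k)) = s₂(k)` and `v₂(C(k,j)) ≥ s₂(i) + s₂(j) - s₂(k)`, where `s₂` is the binary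
digit sum, so the product has `v₂ ≥ s₂(i) + s₂(j)`. This is at least `2`: `s₂(i) ≥ 1`, and either
`j ≥ 1`, or `j = 0` and `i = m` is odd and at least `3`, so that `s₂(i) ≥ 2`.
-/
open Finset

namespace Nat

theorem sum_digits_pos {b n : ℕ} (hn : n ≠ 0) : 0 < (b.digits n).sum :=
  (Nat.pos_of_ne_zero (getLast_digit_ne_zero b hn)).trans_le
    (List.le_sum_of_mem (List.getLast_mem _))

theorem two_le_sum_digits {b n : ℕ} (hb : 1 < b) (hbn : b ≤ n) (hdvd : ¬ b ∣ n) :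
    2 ≤ (b.digits n).sum := by
  rw [digits_def' hb (by omega), List.sum_cons]
  have hmod : 0 < n % b := Nat.pos_of_ne_zero fun h => hdvd (Nat.dvd_of_mod_eq_zero h)
  have hdiv : 0 < (b.digits (n / b)).sum := sum_digits_pos (Nat.div_pos hbn (by omega)).ne'
  omega

theorem sum_digits_base_mul {b : ℕ} (hb : 1 < b) (m : ℕ) :
    (b.digits (b * m)).sum = (b.digits m).sum := by
  rcases Nat.eq_zero_or_pos m with rfl | hm
  · simp
  · simp [digits_base_mul hb hm]

theorem padicValNat_two_centralBinom (k : ℕ) :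
    padicValNat 2 k.centralBinom = (digits 2 k).sum := by
  have h := sub_one_mul_padicValNat_choose_eq_sub_sum_digits' (p := 2) (k := k) (n := k)
  rw [← two_mul, sum_digits_base_mul one_lt_two] at h
  rw [centralBinom_eq_two_mul_choose]
  omega

theorem sum_digits_two_le_padicValNat_centralBinom_mul_choose (i j : ℕ) :
    (digits 2 i).sum + (digits 2 j).sum ≤
      padicValNat 2 ((i + j).centralBinom * (i + j).choose j) := by
  have hchoose := sub_one_mul_padicValNat_choose_eq_sub_sum_digits' (p := 2) (k := j) (n := i)
  rw [padicValNat.mul (centralBinom_ne_zero _) (choose_ne_zero (Nat.le_add_left j i)),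
    padicValNat_two_centralBinom]
  omega

theorem four_dvd_centralBinom_mul_choose {i j : ℕ} (hi : Odd i) (h : 3 ≤ i + 2 * j) :
    4 ∣ (i + j).centralBinom * (i + j).choose j := by
  have hv : 2 ≤ (digits 2 i).sum + (digits 2 j).sum := by
    rcases Nat.eq_zero_or_pos j with rfl | hj
    · exact two_le_sum_digits one_lt_two (by omega) hi.not_two_dvd_nat
    · have := sum_digits_pos (b := 2) hi.pos.ne'
      have := sum_digits_pos (b := 2) hj.ne'
      omega
  exact (padicValNat_dvd_iff_le (mul_ne_zero (centralBinom_ne_zero _)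
    (choose_ne_zero (Nat.le_add_left j i)))).mpr
    (hv.trans (sum_digits_two_le_padicValNat_centralBinom_mul_choose i j))

theorem four_dvd_centralBinom_mul_choose_sub {m k : ℕ} (hm : Odd m) (h3 : 3 ≤ m) (hk : k ≤ m) :
    4 ∣ k.centralBinom * k.choose (m - k) := by
  rcases lt_or_ge k (m - k) with hlt | hle
  · simp [choose_eq_zero_of_lt hlt]
  · have hi : Odd (k - (m - k)) := by
      rw [show k - (m - k) = m - 2 * (m - k) by omega]
      exact Nat.Odd.sub_even (by omega) hm (even_two_mul _)
    have h := four_dvd_centralBinom_mul_choose (j := m - k) hi (by omega)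
    rwa [Nat.sub_add_cancel hle] at h

end Nat

theorem stmt_10 (n : ℕ) : (4 : ℤ) ∣ S (4 * n + 2) := by
  refine Finset.dvd_sum fun k hk => ?_
  rw [Finset.mem_range] at hk
  have hm : Odd (4 * n + 2 - 3) := ⟨2 * n - 1, by omega⟩
  have hdvd : (4 : ℤ) ∣ ((2 * k).choose k : ℤ) * (k.choose (4 * n + 2 - 3 - k) : ℤ) := by
    rw [← Nat.centralBinom_eq_two_mul_choose]
    exact_mod_cast Nat.four_dvd_centralBinom_mul_choose_sub hm (by omega) (by omega)
  rw [Nat.sub_right_comm, mul_right_comm, mul_assoc ((-1 : ℤ) ^ k)]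
  exact (hdvd.mul_left _).mul_right _
end

section
/- Define S_n = sum_{k=0}^{n-3} (-1)^k * C(2k,k) * C(n-3,k) * C(k, n-k-3) for n >= 3 (and S_n = 0 for n < 3). Then for every positive integer n, n divides S_{n+2} + 12*S_{n+1} + 16*S_n. -/
/-!
Write `t m k = (-1)^k C(2k,k) C(m,k) C(k,m-k)`, so that `S m = ∑ₖ t (m-3) k`. Creative telescoping:
with `G k = k² t (n-1) k`, the combination `t (n-1) k + 12 t (n-2) k + 16 t (n-3) k + G (k+1) - G k`
is, for every `k`, `n` times an explicit integer, as the contiguity relations of the binomial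
coefficients show. Summing over `k` the `G`-terms telescope away, since `G 0 = 0` and
`t (n-1) (n+1) = 0`.
-/

open Finset

/-- Unlike `Nat.choose` with truncated subtraction, this vanishes when the lower index is negative. -/
def truncChoose (a b : ℤ) : ℤ :=
  if 0 ≤ b ∧ b ≤ a then (a.toNat.choose b.toNat : ℤ) else 0

theorem truncChoose_eq_zero {a b : ℤ} (h : b < 0 ∨ a < b) : truncChoose a b = 0 :=
  if_neg (by omega)

@[simp, norm_cast]
theorem truncChoose_natCast (a b : ℕ) : truncChoose a b = a.choose b := by
  rcases le_or_gt b a with h | h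
  · simp [truncChoose, h]
  · rw [truncChoose_eq_zero (.inr (by exact_mod_cast h)), Nat.choose_eq_zero_of_lt h, Nat.cast_zero]

theorem sub_mul_truncChoose (a b : ℤ) :
    (a - b) * truncChoose a b = (b + 1) * truncChoose a (b + 1) := by
  rcases lt_or_ge b 0 with hb | hb
  · rw [truncChoose_eq_zero (.inl hb)]
    obtain rfl | hb' : b = -1 ∨ b < -1 := by omega
    · simp
    · rw [truncChoose_eq_zero (.inl (by omega)), mul_zero, mul_zero]
  rcases lt_or_ge a 0 with ha | ha
  · rw [truncChoose_eq_zero (.inr (by omega)), truncChoose_eq_zero (.inr (by omega)),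
      mul_zero, mul_zero]
  lift a to ℕ using ha
  lift b to ℕ using hb
  rw [← Nat.cast_add_one, truncChoose_natCast, truncChoose_natCast]
  rcases le_or_gt b a with h | h
  · have := Nat.choose_succ_right_eq a b
    zify [h] at this
    push_cast
    linarith
  · rw [Nat.choose_eq_zero_of_lt h, Nat.choose_eq_zero_of_lt (by omega)]
    simp

theorem sub_mul_truncChoose_eq_mul_truncChoose_sub_one (a b : ℤ) :
    (a - b) * truncChoose a b = a * truncChoose (a - 1) b := by
  rcases lt_or_ge b 0 with hb | hb
  · rw [truncChoose_eq_zero (.inl hb), truncChoose_eq_zero (.inl hb), mul_zero, mul_zero]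
  rcases le_or_gt a 0 with ha | ha
  · rw [truncChoose_eq_zero (a := a - 1) (.inr (by omega)), mul_zero]
    rcases le_or_gt b a with h | h
    · obtain ⟨rfl, rfl⟩ : a = 0 ∧ b = 0 := by omega
      simp
    · rw [truncChoose_eq_zero (.inr h), mul_zero]
  obtain ⟨a, rfl⟩ : ∃ a' : ℕ, a = a' + 1 := ⟨(a - 1).toNat, by omega⟩
  lift b to ℕ using hb
  rw [add_sub_cancel_right, ← Nat.cast_add_one, truncChoose_natCast, truncChoose_natCast]
  rcases le_or_gt b (a + 1) with h | h
  · have := Nat.choose_mul_succ_eq a b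
    zify [h] at this
    push_cast
    linarith
  · rw [Nat.choose_eq_zero_of_lt h, Nat.choose_eq_zero_of_lt (by omega)]
    simp

theorem truncChoose_succ_left (a : ℕ) (b : ℤ) :
    truncChoose (a + 1) b = truncChoose a b + truncChoose a (b - 1) := by
  rcases lt_or_ge b 0 with hb | hb
  · simp only [truncChoose_eq_zero (.inl hb), truncChoose_eq_zero (.inl (by omega : b - 1 < 0)),
      add_zero]
  lift b to ℕ using hb
  cases b with
  | zero =>
    rw [Nat.cast_zero, zero_sub, truncChoose_eq_zero (b := -1) (.inl (by norm_num)), add_zero]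
    exact_mod_cast (Nat.choose_zero_right (a + 1)).trans (Nat.choose_zero_right a).symm
  | succ b =>
    push_cast
    rw [add_sub_cancel_right]
    exact_mod_cast (Nat.choose_succ_succ' a b).trans (add_comm _ _)

/-- The hypotheses are the contiguity relations of `aⱼ = C(n-j, k)` and `bⱼ = C(k, n-j-k)`. -/
theorem dvd_certificate {R : Type*} [CommRing R] {n k a₁ a₂ a₃ b₀ b₁ b₂ b₃ b₄ : R}
    (ha₁ : (n - 1 - k) * a₁ = (n - 1) * a₂) (ha₂ : (n - 2 - k) * a₂ = (n - 2) * a₃)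
    (hb₁ : (k - (n - 1 - k)) * b₁ = (n - k) * b₀)
    (hb₂ : (k - (n - 2 - k)) * b₂ = (n - 1 - k) * b₁)
    (hb₃ : (k - (n - 3 - k)) * b₃ = (n - 2 - k) * b₂)
    (hb₄ : (k - (n - 4 - k)) * b₄ = (n - 3 - k) * b₃) :
    n ∣ (1 - k ^ 2) * a₁ * b₁ - (4 * k + 2) * (n - 1 - k) * a₁ * (b₂ + b₃)
      + 12 * a₂ * b₂ + 16 * a₃ * b₃ :=
  ⟨a₁ * ((2 * n ^ 2 - 5 * n + 5 * k - 2 * k ^ 2) * b₀ + (n ^ 2 - 5 * k ^ 2) * b₁ - 10 * b₂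
        + (32 - 8 * n + n * k) * b₃ + (56 + 16 * k + 2 * n - n ^ 2) * b₄)
      + a₂ * (-3 * k * b₁ + 15 * b₂ - (12 + 2 * k ^ 2) * b₃
        + (-48 - 44 * k - 4 * k ^ 2 + 6 * n * k) * b₄)
      + 8 * a₃ * b₃, by
    linear_combination
      ((-3 - 3 * k) * b₁ + 18 * b₂ + (-14 - 2 * k - 2 * k ^ 2) * b₃
        + (-64 - 40 * k - 4 * k ^ 2 + 6 * n * k) * b₄) * ha₁
      + 8 * b₃ * ha₂
      + (2 * n ^ 2 + 2 * n * k - 5 * n) * a₁ * hb₁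
      + ((-2 - 4 * k + 6 * n + n * k - n ^ 2) * a₁ + 3 * a₂) * hb₂
      + ((12 + 12 * k - 6 * n - 2 * n * k + n ^ 2) * a₁ - 6 * a₂) * hb₃
      + ((-16 - 18 * k - 2 * k ^ 2 - 2 * n + 4 * n * k - n ^ 2) * a₁ + (16 + 2 * k) * a₂) * hb₄⟩

namespace S

def term (m : ℤ) (k : ℕ) : ℤ :=
  (-1) ^ k * k.centralBinom * truncChoose m k * truncChoose k (m - k)

theorem eq_sum_term (m N : ℕ) (hN : m - 2 ≤ N) :
    S m = ∑ k ∈ range N, term (m - 3) k := by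
  rw [S, ← sum_subset (range_subset_range.mpr hN)]
  · refine sum_congr rfl fun k hk => ?_
    have hk : k + 3 ≤ m := by rw [mem_range] at hk; omega
    rw [term, Nat.centralBinom_eq_two_mul_choose, show (m : ℤ) - 3 = (m - 3 : ℕ) by omega,
      truncChoose_natCast, show (m - 3 : ℕ) - (k : ℤ) = (m - k - 3 : ℕ) by omega,
      truncChoose_natCast]
  · intro k _ hk
    rw [mem_range, not_lt] at hk
    rw [term, truncChoose_eq_zero (.inr (by omega)), mul_zero, zero_mul]

theorem sq_mul_term_succ (m : ℤ) (k : ℕ) :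
    ((k : ℤ) + 1) ^ 2 * term m (k + 1) = -((4 * k + 2) * (m - k) * ((-1) ^ k * k.centralBinom
      * truncChoose m k * (truncChoose k (m - 1 - k) + truncChoose k (m - 2 - k)))) := by
  have hcentral : ((k : ℤ) + 1) * (k + 1).centralBinom = (4 * k + 2) * k.centralBinom := by
    exact_mod_cast (Nat.succ_mul_centralBinom_succ k).trans (by ring)
  have hlower := sub_mul_truncChoose m k
  have hpascal := truncChoose_succ_left k (m - 1 - k)
  rw [show m - 1 - k - 1 = m - 2 - k by ring] at hpascal
  rw [term, show m - ((k + 1 : ℕ) : ℤ) = m - 1 - k by push_cast; ring]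
  push_cast
  linear_combination
    -((-1) ^ k * ((k : ℤ) + 1) * truncChoose m (k + 1) * truncChoose (k + 1) (m - 1 - k)) * hcentral
    + (-1) ^ k * (4 * k + 2) * k.centralBinom * truncChoose (k + 1) (m - 1 - k) * hlower
    - (-1) ^ k * (4 * k + 2) * k.centralBinom * (m - k) * truncChoose m k * hpascal

theorem dvd_term_combination (n k : ℕ) :
    (n : ℤ) ∣ (((k : ℤ) + 1) ^ 2 * term (n - 1) (k + 1) - (k : ℤ) ^ 2 * term (n - 1) k)
      + (term (n - 1) k + 12 * term (n - 2) k + 16 * term (n - 3) k) := by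
  obtain ⟨w, hw⟩ := dvd_certificate (n := (n : ℤ)) (k := k)
    (a₂ := truncChoose (n - 2) k) (a₃ := truncChoose (n - 3) k) (b₀ := truncChoose k (n - k))
    (by convert sub_mul_truncChoose_eq_mul_truncChoose_sub_one (n - 1) k using 3; ring)
    (by convert sub_mul_truncChoose_eq_mul_truncChoose_sub_one (n - 2) k using 3; ring)
    (by convert sub_mul_truncChoose k (n - 1 - k) using 3 <;> ring)
    (by convert sub_mul_truncChoose k (n - 2 - k) using 3 <;> ring)
    (by convert sub_mul_truncChoose k (n - 3 - k) using 3 <;> ring)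
    (by convert sub_mul_truncChoose k (n - 4 - k) using 3 <;> ring)
  refine ⟨(-1) ^ k * k.centralBinom * w, ?_⟩
  rw [sq_mul_term_succ, show (n : ℤ) - 1 - 1 = n - 2 by ring, show (n : ℤ) - 1 - 2 = n - 3 by ring]
  simp only [term]
  linear_combination (-1) ^ k * k.centralBinom * hw

theorem sum_range_telescope_eq_zero (n : ℕ) :
    ∑ k ∈ range (n + 1), (((k : ℤ) + 1) ^ 2 * term (n - 1) (k + 1) - (k : ℤ) ^ 2 * term (n - 1) k)
      = 0 := by
  have hlast : term (n - 1) (n + 1) = 0 := by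
    rw [term, truncChoose_eq_zero (.inr (by push_cast; omega)), mul_zero, zero_mul]
  have := sum_range_sub (fun k => (k : ℤ) ^ 2 * term (n - 1) k) (n + 1)
  push_cast at this
  rw [this, hlast]
  simp

end S

theorem stmt_11_general (n : ℕ) :
    (n : ℤ) ∣ S (n + 2) + 12 * S (n + 1) + 16 * S n := by
  have hsum := dvd_sum fun k (_ : k ∈ range (n + 1)) => S.dvd_term_combination n k
  rw [sum_add_distrib, S.sum_range_telescope_eq_zero, zero_add] at hsum
  rw [S.eq_sum_term (n + 2) (n + 1) (by omega), S.eq_sum_term (n + 1) (n + 1) (by omega),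
    S.eq_sum_term n (n + 1) (by omega), show ((n + 2 : ℕ) : ℤ) - 3 = n - 1 by push_cast; ring,
    show ((n + 1 : ℕ) : ℤ) - 3 = n - 2 by push_cast; ring]
  simpa [mul_sum, sum_add_distrib] using hsum

theorem stmt_11 (n : ℕ) (hn : 0 < n) :
    (n : ℤ) ∣ S (n + 2) + 12 * S (n + 1) + 16 * S n :=
  stmt_11_general n
end

section
/- For every positive integer n and every integer j with 0 <= j <= n-1, n divides C(2j, j) * sum_{k=j}^{n-1} (4k+3) * C(k,j)^2. -/
/-!
Expanding in the Newton basis, `C(2j,j) C(k,j)^2 = ∑_{d ≤ j} c_d C(k, j+d)` with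
`c_d = C(2j, j+d) C(j+d, d)^2`, and summing `(4k+3) C(k,i)` over `k < n` turns the sum into
`∑_d c_d ((4m-1) C(n,m) + 4m C(n,m+1))` with `m = j+d+1`. As `n ∣ m C(n,m)`, this is congruent
modulo `n` to `-∑_d (c_d + 4 c_{d-1}) C(n, j+d+1)`, and each term vanishes modulo `n` because
`j+d+1 ∣ c_d + 4 c_{d-1}` (for `d = 0` this is the divisibility of `C(2j,j)` by `j+1`).
-/

open Finset

theorem choose_succ_mul_add_choose_mul (n k : ℕ) :
    n.choose (k + 1) * (k + 1) + n.choose k * k = n * n.choose k := by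
  rcases le_or_gt k n with hk | hk
  · rw [Nat.choose_succ_right_eq, ← mul_add, Nat.sub_add_cancel hk, mul_comm]
  · simp [Nat.choose_eq_zero_of_lt hk, Nat.choose_eq_zero_of_lt (hk.trans k.lt_succ_self)]

theorem dvd_choose_mul (n m : ℕ) : n ∣ n.choose m * m := by
  cases n with
  | zero => cases m <;> simp
  | succ n =>
    cases m with
    | zero => simp
    | succ m => exact ⟨n.choose m, (Nat.add_one_mul_choose_eq n m).symm⟩

theorem dvd_mul_choose_of_dvd {m c : ℕ} (n : ℕ) (h : m ∣ c) : n ∣ c * n.choose m := by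
  obtain ⟨e, rfl⟩ := h
  rw [mul_comm m, mul_assoc, mul_comm m]
  exact dvd_mul_of_dvd_right (dvd_choose_mul n m) e

theorem sum_range_linear_mul_choose (a b n i : ℕ) :
    ∑ k ∈ range n, (a * k + b) * k.choose i
      = (a * i + b) * n.choose (i + 1) + a * (i + 1) * n.choose (i + 2) := by
  induction n with
  | zero => simp
  | succ n ih =>
    have h := choose_succ_mul_add_choose_mul n i
    rw [sum_range_succ, ih, Nat.choose_succ_succ' n (i + 1), Nat.choose_succ_succ' n i]
    linear_combination a * h.symm

theorem choose_sq_eq_sum (k j : ℕ) :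
    k.choose j ^ 2 = ∑ d ∈ range (j + 1), j.choose d * (j + d).choose d * k.choose (j + d) := by
  rcases lt_or_ge k j with hk | hk
  · simp [Nat.choose_eq_zero_of_lt hk, Nat.choose_eq_zero_of_lt (hk.trans_le (j.le_add_right _))]
  obtain ⟨t, rfl⟩ := Nat.exists_eq_add_of_le hk
  have hmul (d : ℕ) :
      (j + t).choose j * t.choose d = (j + t).choose (j + d) * (j + d).choose d := by
    rcases le_or_gt d t with hd | hd
    · have h := Nat.choose_mul (n := j + t) (k := j + d) (s := j) (by omega)
      simp only [Nat.add_sub_cancel_left] at h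
      rw [← h, Nat.choose_symm_add]
    · simp [Nat.choose_eq_zero_of_lt hd, Nat.choose_eq_zero_of_lt (show j + t < j + d by omega)]
  calc (j + t).choose j ^ 2
      = ∑ p ∈ antidiagonal j, (j + t).choose j * (j.choose p.1 * t.choose p.2) := by
        rw [sq, ← mul_sum, ← Nat.add_choose_eq]
    _ = ∑ p ∈ antidiagonal j, j.choose p.2 * (j + p.2).choose p.2 * (j + t).choose (j + p.2) := by
        refine sum_congr rfl fun p hp => ?_
        rw [Nat.choose_symm_of_eq_add (mem_antidiagonal.mp hp).symm, mul_left_comm, hmul]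
        ring
    _ = _ := by
        rw [← Nat.sum_antidiagonal_swap]
        exact Nat.sum_antidiagonal_eq_sum_range_succ_mk _ j

def sqNewtonCoeff (j d : ℕ) : ℕ := (2 * j).choose (j + d) * (j + d).choose d ^ 2

theorem centralBinom_mul_choose_sq (k j : ℕ) :
    (2 * j).choose j * k.choose j ^ 2
      = ∑ d ∈ range (j + 1), sqNewtonCoeff j d * k.choose (j + d) := by
  rw [choose_sq_eq_sum, mul_sum]
  refine sum_congr rfl fun d _ => ?_
  have h := Nat.choose_mul (n := 2 * j) (k := j + d) (s := j) (by omega)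
  rw [show 2 * j - j = j by omega, Nat.add_sub_cancel_left, Nat.choose_symm_add] at h
  rw [sqNewtonCoeff, ← mul_assoc, ← mul_assoc, ← h]
  ring

theorem centralBinom_mul_sum_range_linear_mul_choose_sq (a b n j : ℕ) :
    (2 * j).choose j * ∑ k ∈ range n, (a * k + b) * k.choose j ^ 2
      = ∑ d ∈ range (j + 1), sqNewtonCoeff j d *
          ((a * (j + d) + b) * n.choose (j + d + 1) + a * (j + d + 1) * n.choose (j + d + 2)) := by
  simp_rw [mul_sum, mul_left_comm _ (a * _ + b), centralBinom_mul_choose_sq, mul_sum]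
  rw [sum_comm]
  refine sum_congr rfl fun d _ => ?_
  rw [← sum_range_linear_mul_choose, mul_sum]
  exact sum_congr rfl fun k _ => by ring

theorem dvd_sqNewtonCoeff_succ_add (j d : ℕ) :
    j + d + 2 ∣ sqNewtonCoeff j (d + 1) + 4 * sqNewtonCoeff j d := by
  have r1 := congrArg (Nat.cast (R := ZMod (j + d + 2)))
    (choose_succ_mul_add_choose_mul (2 * j) (j + d))
  have r2 := congrArg (Nat.cast (R := ZMod (j + d + 2)))
    (choose_succ_mul_add_choose_mul (2 * j) (j + d + 1))
  have r3 := congrArg (Nat.cast (R := ZMod (j + d + 2))) (Nat.add_one_mul_choose_eq (j + d) d)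
  have hm : ((j + d + 2 : ℕ) : ZMod (j + d + 2)) = 0 := ZMod.natCast_self _
  rw [← ZMod.natCast_eq_zero_iff, sqNewtonCoeff, sqNewtonCoeff, ← add_assoc]
  push_cast at *
  set A := ((2 * j).choose (j + d + 1) : ZMod (j + d + 2))
  set A' := ((2 * j).choose (j + d + 1 + 1) : ZMod (j + d + 2))
  set B := ((2 * j).choose (j + d) : ZMod (j + d + 2))
  set U := ((j + d).choose d : ZMod (j + d + 2))
  set V := ((j + d + 1).choose (d + 1) : ZMod (j + d + 2))
  -- Modulo `j + d + 2`: `U = -(d+1) V` by `r3`, `A = 2(d+1) B` by `r1` and `(2d+3) A = 0` by `r2`,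
  -- so `A V^2 + 4 B U^2 = A V^2 + 2(d+1) A V^2 = 0`.
  linear_combination V ^ 2 * r2 + 2 * (d + 1) * V ^ 2 * r1 - 4 * B * (U - (d + 1) * V) * r3
    + (V ^ 2 * (A - A') + 2 * (d + 1) * V ^ 2 * (B - A) + 4 * B * U * (U - (d + 1) * V)) * hm

theorem dvd_sum_sqNewtonCoeff_mul_choose (n j : ℕ) :
    n ∣ ∑ d ∈ range (j + 1),
      sqNewtonCoeff j d * (n.choose (j + d + 1) + 4 * n.choose (j + d + 2)) := by
  have hlast : sqNewtonCoeff j (j + 1) = 0 := by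
    rw [sqNewtonCoeff, Nat.choose_eq_zero_of_lt (by omega), zero_mul]
  have hshift := sum_range_succ' (fun d => sqNewtonCoeff j d * n.choose (j + d + 1)) (j + 1)
  rw [sum_range_succ, hlast, zero_mul, add_zero] at hshift
  have hsplit : ∑ d ∈ range (j + 1),
        sqNewtonCoeff j d * (n.choose (j + d + 1) + 4 * n.choose (j + d + 2))
      = sqNewtonCoeff j 0 * n.choose (j + 1) + ∑ d ∈ range (j + 1),
          (sqNewtonCoeff j (d + 1) + 4 * sqNewtonCoeff j d) * n.choose (j + (d + 1) + 1) := by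
    simp_rw [mul_add, sum_add_distrib, hshift, add_mul, sum_add_distrib]
    ring_nf
  rw [hsplit]
  refine dvd_add (dvd_mul_choose_of_dvd n ?_)
    (dvd_sum fun d _ => dvd_mul_choose_of_dvd n (dvd_sqNewtonCoeff_succ_add j d))
  simpa [sqNewtonCoeff, Nat.centralBinom_eq_two_mul_choose] using Nat.succ_dvd_centralBinom j

theorem dvd_sum_sqNewtonCoeff_mul_linear_choose (n j : ℕ) :
    n ∣ ∑ d ∈ range (j + 1), sqNewtonCoeff j d *
      ((4 * (j + d) + 3) * n.choose (j + d + 1) + 4 * (j + d + 1) * n.choose (j + d + 2)) := by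
  refine (Nat.dvd_add_left (dvd_sum_sqNewtonCoeff_mul_choose n j)).mp ?_
  rw [← sum_add_distrib]
  refine dvd_sum fun d _ => ?_
  have hterm : sqNewtonCoeff j d *
        ((4 * (j + d) + 3) * n.choose (j + d + 1) + 4 * (j + d + 1) * n.choose (j + d + 2))
      + sqNewtonCoeff j d * (n.choose (j + d + 1) + 4 * n.choose (j + d + 2))
      = 4 * sqNewtonCoeff j d *
        (n.choose (j + d + 1) * (j + d + 1) + n.choose (j + d + 2) * (j + d + 2)) := by
    ring
  rw [hterm]
  exact dvd_mul_of_dvd_right (dvd_add (dvd_choose_mul _ _) (dvd_choose_mul _ _)) _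

theorem stmt_13_general (n j : ℕ) :
    n ∣ (2 * j).choose j * ∑ k ∈ Finset.Ico j n, (4 * k + 3) * (k.choose j) ^ 2 := by
  have hIco : ∑ k ∈ Ico j n, (4 * k + 3) * k.choose j ^ 2
      = ∑ k ∈ range n, (4 * k + 3) * k.choose j ^ 2 := by
    refine sum_subset (fun k hk => ?_) (fun k hkn hkj => ?_)
    · exact mem_range.mpr (mem_Ico.mp hk).2
    · simp only [mem_Ico, mem_range, not_and, not_lt] at hkn hkj
      rw [Nat.choose_eq_zero_of_lt (by omega), zero_pow two_ne_zero, mul_zero]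
  rw [hIco, centralBinom_mul_sum_range_linear_mul_choose_sq]
  exact dvd_sum_sqNewtonCoeff_mul_linear_choose n j

theorem stmt_13 (n j : ℕ) (hn : 0 < n) (hj : j ≤ n - 1) :
    n ∣ (2 * j).choose j * ∑ k ∈ Finset.Ico j n, (4 * k + 3) * (k.choose j) ^ 2 :=
  stmt_13_general n j
end

section
/- For every positive integer n and every non-negative integer k <= n-1, n divides C(2k,k) * sum_{i=0}^{k} [ C(n, k+i+1) + 4*C(n, k+i+2) ] * C(k+i, i) * C(k, i). -/
open Finset

/-
Write `c j = C(2k, k+j) C(k+j, j)²`, which equals `C(2k,k) C(k+j,j) C(k,j)`. Summing by parts,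
the quantity is `C(n,k+1) c 0 + ∑_{i ≤ k} C(n,k+i+2) (c (i+1) + 4 c i)`. Since
`C(n, m+1) (m+1) = n C(n-1, m)`, it suffices that `k+1 ∣ c 0 = C(2k,k)` and
`k+i+2 ∣ c (i+1) + 4 c i`. For the latter, the recurrences of `C(2k, ·)` and `C(·+j, j)` give
`(k+i+1) (c (i+1) + 4 c i)
  = (k+i+2) (C(2k,k+i+2) C(k+i+1,i+1)² + 2 C(2k,k+i) C(k+i+1,i+1) C(k+i,i))`,
and `k+i+1` is coprime to `k+i+2`.
-/

theorem Nat.cast_choose_succ_right_eq (n m : ℕ) :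
    (n.choose (m + 1) : ℤ) * (m + 1) = n.choose m * ((n : ℤ) - m) := by
  rcases le_or_gt m n with hmn | hnm
  · rw [← Nat.cast_sub hmn]
    exact_mod_cast Nat.choose_succ_right_eq n m
  · simp [Nat.choose_eq_zero_of_lt hnm, Nat.choose_eq_zero_of_lt (hnm.trans (Nat.lt_succ_self m))]

theorem Nat.add_choose_mul_choose (a b j : ℕ) :
    (a + b).choose a * b.choose j = (a + b).choose (a + j) * (a + j).choose j := by
  rcases le_or_gt j b with hjb | hbj
  · have h := Nat.choose_mul (n := a + b) (Nat.le_add_right a j)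
    rw [Nat.choose_symm_add, Nat.add_sub_cancel_left, Nat.add_sub_cancel_left] at h
    exact h.symm
  · rw [Nat.choose_eq_zero_of_lt hbj, Nat.choose_eq_zero_of_lt (show a + b < a + j by omega)]
    simp

theorem Nat.dvd_choose_succ_mul {n m d : ℕ} (h : m + 1 ∣ d) : n ∣ n.choose (m + 1) * d := by
  obtain ⟨e, rfl⟩ := h
  cases n with
  | zero => simp
  | succ n => exact ⟨n.choose m * e, by rw [← mul_assoc, ← Nat.add_one_mul_choose_eq]; ring⟩

theorem Finset.sum_range_mul_add_mul_shift {R : Type*} [CommSemiring R] (f c : ℕ → R) (a : R)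
    (N : ℕ) :
    ∑ i ∈ range N, (f i + a * f (i + 1)) * c i + f N * c N
      = f 0 * c 0 + ∑ i ∈ range N, f (i + 1) * (c (i + 1) + a * c i) := by
  induction N with
  | zero => simp
  | succ N ih =>
    rw [sum_range_succ, sum_range_succ, ← add_assoc, ← ih]
    ring

theorem add_two_dvd_choose_mul_sq (k i : ℕ) :
    k + i + 2 ∣ (2 * k).choose (k + i + 1) * (k + i + 1).choose (i + 1) ^ 2
      + 4 * ((2 * k).choose (k + i) * (k + i).choose i ^ 2) := by
  have he₁ := Nat.cast_choose_succ_right_eq (2 * k) (k + i)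
  have he₂ := Nat.cast_choose_succ_right_eq (2 * k) (k + i + 1)
  have hb := Nat.add_one_mul_choose_eq (k + i) i
  set e₀ := (2 * k).choose (k + i)
  set e₁ := (2 * k).choose (k + i + 1)
  set e₂ := (2 * k).choose (k + i + 1 + 1)
  set b₀ := (k + i).choose i
  set b₁ := (k + i + 1).choose (i + 1)
  have hid : (k + i + 1) * (e₁ * b₁ ^ 2 + 4 * (e₀ * b₀ ^ 2))
      = (k + i + 1 + 1) * (e₂ * b₁ ^ 2 + 2 * e₀ * b₁ * b₀) := by
    push_cast at he₁ he₂
    zify at hb ⊢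
    linear_combination (-(b₁ : ℤ) ^ 2) * he₂ + (4 * (e₀ : ℤ) * b₀ - 2 * e₁ * b₁) * hb
      + 2 * (b₁ : ℤ) * b₀ * he₁
  have hcop : Nat.Coprime (k + i + 1 + 1) (k + i + 1) :=
    Nat.coprime_self_add_left.mpr (Nat.coprime_one_left _)
  exact hcop.dvd_of_dvd_mul_left ⟨_, hid⟩

theorem stmt_14_general (n k : ℕ) :
    n ∣ (2 * k).choose k *
      ∑ i ∈ Finset.range (k + 1),
        (n.choose (k + i + 1) + 4 * n.choose (k + i + 2)) * (k + i).choose i * k.choose i := by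
  set c : ℕ → ℕ := fun j => (2 * k).choose (k + j) * (k + j).choose j ^ 2 with hc
  have hc_last : c (k + 1) = 0 := by
    simp [hc, Nat.choose_eq_zero_of_lt (show 2 * k < k + (k + 1) by omega)]
  have hsum : (2 * k).choose k *
      ∑ i ∈ Finset.range (k + 1),
        (n.choose (k + i + 1) + 4 * n.choose (k + i + 2)) * (k + i).choose i * k.choose i
      = n.choose (k + 1) * c 0
        + ∑ i ∈ range (k + 1), n.choose (k + i + 2) * (c (i + 1) + 4 * c i) := by
    have h := sum_range_mul_add_mul_shift (fun i => n.choose (k + i + 1)) c 4 (k + 1)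
    have hidx : ∀ i, k + (i + 1) + 1 = k + i + 2 := fun i => by omega
    simp only [hc_last, hidx, mul_zero, add_zero] at h
    rw [mul_sum, ← h]
    refine sum_congr rfl fun i _ => ?_
    have hci : (2 * k).choose k * k.choose i = (2 * k).choose (k + i) * (k + i).choose i := by
      simpa only [← two_mul] using Nat.add_choose_mul_choose k k i
    simp only [hc]
    linear_combination ((n.choose (k + i + 1) + 4 * n.choose (k + i + 2)) * (k + i).choose i) * hci
  rw [hsum]
  refine dvd_add (Nat.dvd_choose_succ_mul ?_) (dvd_sum fun i _ => Nat.dvd_choose_succ_mul ?_)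
  · simpa [hc, Nat.centralBinom_eq_two_mul_choose] using Nat.succ_dvd_centralBinom k
  · exact add_two_dvd_choose_mul_sq k i

theorem stmt_14 (n k : ℕ) (hn : 0 < n) (hk : k ≤ n - 1) :
    n ∣ (2 * k).choose k *
      ∑ i ∈ Finset.range (k + 1),
        (n.choose (k + i + 1) + 4 * n.choose (k + i + 2)) * (k + i).choose i * k.choose i :=
  stmt_14_general n k
end
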